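/- arXiv:2203.13935 — 5 statements merged into one kernel-verified Lean document; each statement's English description precedes it below -/
import Mathlib

section
/- Let f = (f_0,...,f_{H-1}) with f_H ≡ 0, and suppose for every h ∈ [H] the average Bellman error along π* satisfies |E[f_h(x_h,a_h) − R_h(x_h,a_h) − f_{h+1}(x_{h+1},a_{h+1}) | a_{0:h}∼π*, a_{h+1}∼π_f]| ≤ ε'. Then f_0(x_0, π_f(x_0)) ≥ V*_0(x_0) − H·ε', where V*_0(x_0) = E[∑_{h=0}^{H-1} R_h(x_h,a_h) | π*]. -/
/-!
Write `V h = E_{x∼ρ_h}[f_h(x, π_f(x))]` for the value that `f` predicts at step `h` along `π*`.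
Pushing `ρ_h` through the transition of `π*` gives `ρ_{h+1}`, so the last term of the `h`-th
Bellman error is `V (h+1)`; and by greedyness `E_{ρ_h}[f_h(x, π*(x))] ≤ V h`. Hence each
expected reward is at most `V h - V (h+1) + ε'`, and summing telescopes to
`V 0 - V H + H ε' = f_0(x_0, π_f(x_0)) + H ε'`.
-/

open Finset

section Kernel

variable {X : Type*} [Fintype X]

lemma sum_mul_sum_kernel_eq (μ ν g : X → ℝ) (K : X → X → ℝ)
    (hν : ∀ x', ν x' = ∑ x, μ x * K x x') :
    ∑ x, μ x * ∑ x', K x x' * g x' = ∑ x', ν x' * g x' := by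
  simp only [hν, mul_sum, sum_mul, mul_assoc]
  exact sum_comm

lemma nonneg_of_nonneg_kernel_iterate (ρ : ℕ → X → ℝ) (K : ℕ → X → X → ℝ)
    (hK : ∀ h x x', 0 ≤ K h x x') (hρ0 : ∀ x, 0 ≤ ρ 0 x)
    (hρ : ∀ h x', ρ (h + 1) x' = ∑ x, ρ h x * K h x x') :
    ∀ h x, 0 ≤ ρ h x := by
  intro h
  induction h with
  | zero => exact hρ0
  | succ h ih =>
    intro x'
    rw [hρ]
    exact sum_nonneg fun x _ => mul_nonneg (ih x) (hK h x x')

end Kernel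

lemma sum_range_le_of_le_sub_add {r V : ℕ → ℝ} {ε : ℝ} {H : ℕ}
    (hstep : ∀ h < H, r h ≤ V h - V (h + 1) + ε) :
    ∑ h ∈ range H, r h ≤ V 0 - V H + H * ε := by
  induction H with
  | zero => simp
  | succ H ih =>
    rw [sum_range_succ]
    have := hstep H (Nat.lt_succ_self H)
    have := ih fun h hh => hstep h (Nat.lt_succ_of_lt hh)
    push_cast
    linarith

/-- `ρ h` is the state distribution at step `h` under `πstar`, started from `x0`. -/
theorem stmt4_general {X A : Type*} [Fintype X] [DecidableEq X]
    (H : ℕ) (x0 : X)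
    (P : ℕ → X → A → X → ℝ) (hPnn : ∀ h x a x', 0 ≤ P h x a x')
    (R : ℕ → X → A → ℝ)
    (f : ℕ → X → A → ℝ) (hfH : ∀ x a, f H x a = 0)
    (πf πstar : ℕ → X → A)
    (hgreedy : ∀ h x a, f h x a ≤ f h x (πf h x))
    (ρ : ℕ → X → ℝ)
    (hρ0 : ∀ x, ρ 0 x = if x = x0 then 1 else 0)
    (hρ : ∀ h x', ρ (h + 1) x' = ∑ x, ρ h x * P h x (πstar h x) x')
    (ε' : ℝ)
    (hbell : ∀ h ∈ range H,
      |∑ x, ρ h x * (f h x (πstar h x) - R h x (πstar h x)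
        - ∑ x', P h x (πstar h x) x' * f (h + 1) x' (πf (h + 1) x'))| ≤ ε') :
    (∑ h ∈ range H, ∑ x, ρ h x * R h x (πstar h x)) - H * ε'
      ≤ f 0 x0 (πf 0 x0) := by
  have hρnn := nonneg_of_nonneg_kernel_iterate ρ (fun h x => P h x (πstar h x))
    (fun h x => hPnn h x _) (fun x => by rw [hρ0]; positivity) hρ
  set V : ℕ → ℝ := fun h => ∑ x, ρ h x * f h x (πf h x)
  have hV0 : V 0 = f 0 x0 (πf 0 x0) := by simp [V, hρ0]
  have hVH : V H = 0 := by simp [V, hfH]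
  have hstep : ∀ h < H, ∑ x, ρ h x * R h x (πstar h x) ≤ V h - V (h + 1) + ε' := by
    intro h hh
    have hnext := sum_mul_sum_kernel_eq (ρ h) (ρ (h + 1))
      (fun x' => f (h + 1) x' (πf (h + 1) x')) (fun x => P h x (πstar h x)) (hρ h)
    have hgreedy_mean : ∑ x, ρ h x * f h x (πstar h x) ≤ V h :=
      sum_le_sum fun x _ => mul_le_mul_of_nonneg_left (hgreedy h x _) (hρnn h x)
    have hbell_low := neg_le_of_abs_le (hbell h (mem_range.2 hh))
    simp only [mul_sub, sum_sub_distrib, hnext] at hbell_low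
    linarith
  have := sum_range_le_of_le_sub_add hstep
  rw [hV0, hVH] at this
  linarith

/-- Telescoping lemma: if all the average Bellman errors of `f` along the
optimal policy `π*` are at most `ε'` in absolute value, then the (greedy) value
of `f` at the initial state is at least `V*_0(x_0) − H·ε'`.  Here `ρ h` is the
state distribution at step `h` induced by the deterministic policy `π*` from
the fixed initial state `x_0`, so that
`V*_0(x_0) = ∑_{h<H} E_{x∼ρ_h}[R_h(x, π*(x))]`. -/
theorem stmt4 {X A : Type*} [Fintype X] [Fintype A] [DecidableEq X]
    (H : ℕ) (x0 : X)
    (P : ℕ → X → A → X → ℝ) (hPnn : ∀ h x a x', 0 ≤ P h x a x')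
    (hP1 : ∀ h x a, ∑ x', P h x a x' = 1)
    (R : ℕ → X → A → ℝ)
    (f : ℕ → X → A → ℝ) (hfH : ∀ x a, f H x a = 0)
    (πf πstar : ℕ → X → A)
    (hgreedy : ∀ h x a, f h x a ≤ f h x (πf h x))
    (ρ : ℕ → X → ℝ)
    (hρ0 : ∀ x, ρ 0 x = if x = x0 then 1 else 0)
    (hρ : ∀ h x', ρ (h + 1) x' = ∑ x, ρ h x * P h x (πstar h x) x')
    (ε' : ℝ)
    (hbell : ∀ h ∈ range H,
      |∑ x, ρ h x * (f h x (πstar h x) - R h x (πstar h x)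
        - ∑ x', P h x (πstar h x) x' * f (h + 1) x' (πf (h + 1) x'))| ≤ ε') :
    (∑ h ∈ range H, ∑ x, ρ h x * R h x (πstar h x)) - H * ε'
      ≤ f 0 x0 (πf 0 x0) :=
  stmt4_general H x0 P hPnn R f hfH πf πstar hgreedy ρ hρ0 hρ ε' hbell
end

section
/- Let π* be a deterministic policy and π_f another deterministic policy in a finite-horizon MDP with rewards in [0,1] and horizon H. Then v^{π_f} ≥ v^{π*} − H · E[∑_{h=0}^{H-1} 𝟙{π_f(x_h) ≠ π*(x_h)} | trajectory drawn under π*]. -/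
/-!
Performance difference argument. Along the state distribution of `π*`, replace `π*` by `π_f`
one step at a time: the expected reward of `π*` minus the value of `π_f` telescopes into the
expected one-step advantages `Q^{π_f}_h(x, π*(x)) - V^{π_f}_h(x)`. An advantage vanishes where the
two policies agree and is at most `H` elsewhere, since values of `k`-step tails lie in `[0, k]`.
-/

open Finset

section MDP

variable {X A : Type*} [Fintype X] (P : ℕ → X → A → X → ℝ) (R : ℕ → X → A → ℝ)

/-- `valueToGo P R π h k x`: expected reward of `π` over the times `h, …, h + k - 1`, from `x`
at time `h`. -/
noncomputable def valueToGo (π : ℕ → X → A) : ℕ → ℕ → X → ℝ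
  | _, 0, _ => 0
  | h, k + 1, x => R h x (π h x) + ∑ x', P h x (π h x) x' * valueToGo π (h + 1) k x'

noncomputable def qValue (π : ℕ → X → A) (h k : ℕ) (x : X) (a : A) : ℝ :=
  R h x a + ∑ x', P h x a x' * valueToGo P R π (h + 1) k x'

variable {P R}

theorem valueToGo_succ (π : ℕ → X → A) (h k : ℕ) (x : X) :
    valueToGo P R π h (k + 1) x = qValue P R π h k x (π h x) :=
  rfl

theorem valueToGo_nonneg (hPnn : ∀ h x a x', 0 ≤ P h x a x') (hR : ∀ h x a, 0 ≤ R h x a)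
    (π : ℕ → X → A) (k : ℕ) : ∀ h x, 0 ≤ valueToGo P R π h k x := by
  induction k with
  | zero => intro h x; rfl
  | succ k ih =>
    intro h x
    exact add_nonneg (hR _ _ _) (sum_nonneg fun x' _ => mul_nonneg (hPnn _ _ _ _) (ih _ _))

theorem sum_mul_le_of_le {P : X → ℝ} (hPnn : ∀ x, 0 ≤ P x) (hP1 : ∑ x, P x = 1)
    {f : X → ℝ} {c : ℝ} (hf : ∀ x, f x ≤ c) : ∑ x, P x * f x ≤ c :=
  calc ∑ x, P x * f x ≤ ∑ x, P x * c :=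
        sum_le_sum fun x _ => mul_le_mul_of_nonneg_left (hf x) (hPnn x)
    _ = c := by rw [← sum_mul, hP1, one_mul]

theorem valueToGo_le (hPnn : ∀ h x a x', 0 ≤ P h x a x') (hP1 : ∀ h x a, ∑ x', P h x a x' = 1)
    (hR : ∀ h x a, R h x a ≤ 1) (π : ℕ → X → A) (k : ℕ) :
    ∀ h x, valueToGo P R π h k x ≤ k := by
  induction k with
  | zero => intro h x; simp [valueToGo]
  | succ k ih =>
    intro h x
    have hnext := sum_mul_le_of_le (hPnn h x (π h x)) (hP1 h x (π h x)) (ih (h + 1))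
    rw [valueToGo, Nat.cast_succ]
    linarith [hR h x (π h x)]

theorem qValue_sub_valueToGo_le [DecidableEq A] (hPnn : ∀ h x a x', 0 ≤ P h x a x')
    (hP1 : ∀ h x a, ∑ x', P h x a x' = 1) (hR : ∀ h x a, 0 ≤ R h x a ∧ R h x a ≤ 1)
    (π : ℕ → X → A) (h k : ℕ) (x : X) (a : A) :
    qValue P R π h k x a - valueToGo P R π h (k + 1) x
      ≤ (k + 1) * (if π h x ≠ a then 1 else 0) := by
  by_cases hxa : π h x = a
  · simp [valueToGo_succ, hxa]
  · have hnext := sum_mul_le_of_le (hPnn h x a) (hP1 h x a)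
      (valueToGo_le hPnn hP1 (fun h x a => (hR h x a).2) π k (h + 1))
    have hV := valueToGo_nonneg hPnn (fun h x a => (hR h x a).1) π (k + 1) h x
    rw [if_pos hxa, mul_one, qValue]
    linarith [(hR h x a).2]

theorem stateDist_nonneg (hPnn : ∀ h x a x', 0 ≤ P h x a x') {π : ℕ → X → A}
    {ρ : ℕ → X → ℝ} (hρ0 : ∀ x, 0 ≤ ρ 0 x)
    (hρ : ∀ h x', ρ (h + 1) x' = ∑ x, ρ h x * P h x (π h x) x') : ∀ h x, 0 ≤ ρ h x := by
  intro h
  induction h with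
  | zero => exact hρ0
  | succ h ih =>
    intro x'
    rw [hρ]
    exact sum_nonneg fun x _ => mul_nonneg (ih x) (hPnn _ _ _ _)

theorem sum_stateDist_mul {π : ℕ → X → A} {ρ : ℕ → X → ℝ}
    (hρ : ∀ h x', ρ (h + 1) x' = ∑ x, ρ h x * P h x (π h x) x') (h : ℕ) (f : X → ℝ) :
    ∑ x', ρ (h + 1) x' * f x' = ∑ x, ρ h x * ∑ x', P h x (π h x) x' * f x' := by
  simp_rw [hρ]
  exact (Matrix.dotProduct_mulVec (ρ h) (fun x => P h x (π h x)) f).symm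

theorem sum_stateDist_mul_valueToGo {π : ℕ → X → A} {ρ : ℕ → X → ℝ}
    (hρ : ∀ h x', ρ (h + 1) x' = ∑ x, ρ h x * P h x (π h x) x') (k : ℕ) :
    ∀ h, ∑ x, ρ h x * valueToGo P R π h k x
      = ∑ t ∈ Ico h (h + k), ∑ x, ρ t x * R t x (π t x) := by
  induction k with
  | zero => intro h; simp [valueToGo]
  | succ k ih =>
    intro h
    rw [sum_eq_sum_Ico_succ_bot (by omega), show h + (k + 1) = h + 1 + k by omega, ← ih,
      sum_stateDist_mul hρ]
    simp only [valueToGo, mul_add, sum_add_distrib]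

theorem expected_advantage_le [DecidableEq A] (hPnn : ∀ h x a x', 0 ≤ P h x a x')
    (hP1 : ∀ h x a, ∑ x', P h x a x' = 1) (hR : ∀ h x a, 0 ≤ R h x a ∧ R h x a ≤ 1)
    {π : ℕ → X → A} (π' : ℕ → X → A) {ρ : ℕ → X → ℝ} (hρnn : ∀ h x, 0 ≤ ρ h x)
    (hρ : ∀ h x', ρ (h + 1) x' = ∑ x, ρ h x * P h x (π h x) x') (h k : ℕ) :
    ∑ x, ρ h x * R h x (π h x) + ∑ x, ρ (h + 1) x * valueToGo P R π' (h + 1) k x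
        - ∑ x, ρ h x * valueToGo P R π' h (k + 1) x
      ≤ (k + 1) * ∑ x, ρ h x * (if π' h x ≠ π h x then 1 else 0) := by
  rw [sum_stateDist_mul hρ, ← sum_add_distrib, ← sum_sub_distrib, mul_sum]
  refine sum_le_sum fun x _ => ?_
  have hgap := qValue_sub_valueToGo_le hPnn hP1 hR π' h k x (π h x)
  rw [qValue] at hgap
  linarith [mul_le_mul_of_nonneg_left hgap (hρnn h x)]

theorem sum_reward_sub_valueToGo_le [DecidableEq A] (hPnn : ∀ h x a x', 0 ≤ P h x a x')
    (hP1 : ∀ h x a, ∑ x', P h x a x' = 1) (hR : ∀ h x a, 0 ≤ R h x a ∧ R h x a ≤ 1)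
    {π : ℕ → X → A} (π' : ℕ → X → A) {ρ : ℕ → X → ℝ} (hρnn : ∀ h x, 0 ≤ ρ h x)
    (hρ : ∀ h x', ρ (h + 1) x' = ∑ x, ρ h x * P h x (π h x) x') (k : ℕ) :
    ∀ h, ∑ t ∈ Ico h (h + k), ∑ x, ρ t x * R t x (π t x)
        - ∑ x, ρ h x * valueToGo P R π' h k x
      ≤ k * ∑ t ∈ Ico h (h + k), ∑ x, ρ t x * (if π' t x ≠ π t x then 1 else 0) := by
  induction k with
  | zero => intro h; simp [valueToGo]
  | succ k ih =>
    intro h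
    have hD : 0 ≤ ∑ t ∈ Ico (h + 1) (h + 1 + k),
        ∑ x, ρ t x * (if π' t x ≠ π t x then (1 : ℝ) else 0) :=
      sum_nonneg fun t _ => sum_nonneg fun x _ => mul_nonneg (hρnn t x) (by split_ifs <;> norm_num)
    have hstep := expected_advantage_le hPnn hP1 hR π' hρnn hρ h k
    have htail := ih (h + 1)
    have hlt : h < h + 1 + k := by omega
    rw [show h + (k + 1) = h + 1 + k by omega, sum_eq_sum_Ico_succ_bot hlt,
      sum_eq_sum_Ico_succ_bot hlt]
    push_cast
    linarith

end MDP

theorem stmt6_general {X A : Type*} [Fintype X] [DecidableEq X] [DecidableEq A]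
    (H : ℕ) (x0 : X)
    (P : ℕ → X → A → X → ℝ) (hPnn : ∀ h x a x', 0 ≤ P h x a x')
    (hP1 : ∀ h x a, ∑ x', P h x a x' = 1)
    (R : ℕ → X → A → ℝ) (hR : ∀ h x a, 0 ≤ R h x a ∧ R h x a ≤ 1)
    (πstar πf : ℕ → X → A)
    (ρs ρf : ℕ → X → ℝ)
    (hρs0 : ∀ x, ρs 0 x = if x = x0 then 1 else 0)
    (hρs : ∀ h x', ρs (h + 1) x' = ∑ x, ρs h x * P h x (πstar h x) x')
    (hρf0 : ∀ x, ρf 0 x = if x = x0 then 1 else 0)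
    (hρf : ∀ h x', ρf (h + 1) x' = ∑ x, ρf h x * P h x (πf h x) x') :
    (∑ h ∈ range H, ∑ x, ρs h x * R h x (πstar h x))
      - H * (∑ h ∈ range H, ∑ x, ρs h x * (if πf h x ≠ πstar h x then 1 else 0))
      ≤ ∑ h ∈ range H, ∑ x, ρf h x * R h x (πf h x) := by
  have hρs_nonneg : ∀ h x, 0 ≤ ρs h x :=
    stateDist_nonneg hPnn (fun x => by rw [hρs0]; split_ifs <;> norm_num) hρs
  have hsame_start : ρs 0 = ρf 0 := funext fun x => by rw [hρs0, hρf0]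
  have hbound := sum_reward_sub_valueToGo_le hPnn hP1 hR πf hρs_nonneg hρs H 0
  have hvalue := sum_stateDist_mul_valueToGo (R := R) hρf H 0
  rw [hsame_start, hvalue] at hbound
  simp only [zero_add, ← range_eq_Ico] at hbound
  linarith

/-- RL-to-SL reduction: for deterministic policies `π*` and `π_f` in a
finite-horizon MDP with rewards in `[0,1]`,
`v^{π_f} ≥ v^{π*} − H·E[∑_{h<H} 𝟙{π_f(x_h) ≠ π*(x_h)} | π*]`, where the
expectation is over the state distribution induced by `π*`.  Here `ρs` (resp.
`ρf`) is the state distribution at each step under `π*` (resp. `π_f`) started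
from `x_0`, and `v^π = ∑_{h<H} E_{x∼ρ^π_h}[R_h(x, π(x))]`. -/
theorem stmt6 {X A : Type*} [Fintype X] [Fintype A] [DecidableEq X] [DecidableEq A]
    (H : ℕ) (x0 : X)
    (P : ℕ → X → A → X → ℝ) (hPnn : ∀ h x a x', 0 ≤ P h x a x')
    (hP1 : ∀ h x a, ∑ x', P h x a x' = 1)
    (R : ℕ → X → A → ℝ) (hR : ∀ h x a, 0 ≤ R h x a ∧ R h x a ≤ 1)
    (πstar πf : ℕ → X → A)
    (ρs ρf : ℕ → X → ℝ)
    (hρs0 : ∀ x, ρs 0 x = if x = x0 then 1 else 0)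
    (hρs : ∀ h x', ρs (h + 1) x' = ∑ x, ρs h x * P h x (πstar h x) x')
    (hρf0 : ∀ x, ρf 0 x = if x = x0 then 1 else 0)
    (hρf : ∀ h x', ρf (h + 1) x' = ∑ x, ρf h x * P h x (πf h x) x') :
    (∑ h ∈ range H, ∑ x, ρs h x * R h x (πstar h x))
      - H * (∑ h ∈ range H, ∑ x, ρs h x * (if πf h x ≠ πstar h x then 1 else 0))
      ≤ ∑ h ∈ range H, ∑ x, ρf h x * R h x (πf h x) :=
  stmt6_general H x0 P hPnn hP1 R hR πstar πf ρs ρf hρs0 hρs hρf0 hρf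
end

section
/- There exists a finite-horizon MDP (with H = 2), a function class F = {Q*, f} containing Q*, a weight class W = {w*, w_bad} containing w*, and a data distribution d^D covering π*, such that both f and Q* have zero population average Bellman error E_{d^D_h}[w_h·(g_h − T_h g_{h+1})] for every w ∈ W and h, both achieve f_0(x_0, π_f(x_0)) = Q*_0(x_0, π*(x_0)) = 1, yet the greedy policy π_f is not ε-optimal for any ε < 1. -/
/-!
The data distribution is the occupancy measure of `π*`, which only visits `(x₀, L₁)` and
`(x_A, L₂)` on the steps that count. The function `f` agrees with `Q*` there, so its pointwise
Bellman residual vanishes on the support of `d^D`, and every weighted average of it is zero,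
whatever the weight. Off the data, `f` claims that `R₁` also earns value `1` through
`f₁(x_B, ·) = 1`; its greedy policy, breaking the tie at `x₀` toward `R₁`, goes
`x₀ → x_B → x_D` and collects no reward, while `π*` collects `1`.
-/

open Finset

lemma Finset.sup'_univ_eq_of_forall_le {α β : Type*} [Fintype α] [Nonempty α] [LinearOrder β]
    (g : α → β) {a₀ : α} (hg : ∀ a, g a ≤ g a₀) : univ.sup' univ_nonempty g = g a₀ :=
  le_antisymm (sup'_le _ _ fun a _ => hg a) (le_sup' g (mem_univ a₀))

namespace MDP

variable {S A : Type*}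

def stateDist [Fintype S] [DecidableEq S] (P : ℕ → S → A → S → ℝ) (x₀ : S) (π : ℕ → S → A) :
    ℕ → S → ℝ
  | 0, x => if x = x₀ then 1 else 0
  | h + 1, x' => ∑ x, stateDist P x₀ π h x * P h x (π h x) x'

def occupancy [Fintype S] [DecidableEq S] [DecidableEq A] (P : ℕ → S → A → S → ℝ) (x₀ : S)
    (π : ℕ → S → A) (h : ℕ) (x : S) (a : A) : ℝ :=
  stateDist P x₀ π h x * if a = π h x then 1 else 0

lemma occupancy_apply_self [Fintype S] [DecidableEq S] [DecidableEq A] (P : ℕ → S → A → S → ℝ)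
    (x₀ : S) (π : ℕ → S → A) (h : ℕ) (x : S) :
    occupancy P x₀ π h x (π h x) = stateDist P x₀ π h x := by
  simp [occupancy]

def detKernel [DecidableEq S] (next : S → A → S) (_h : ℕ) (x : S) (a : A) (x' : S) : ℝ :=
  if x' = next x a then 1 else 0

def trajectory (next : S → A → S) (x₀ : S) (π : ℕ → S → A) : ℕ → S
  | 0 => x₀
  | h + 1 => next (trajectory next x₀ π h) (π h (trajectory next x₀ π h))

lemma detKernel_nonneg [DecidableEq S] (next : S → A → S) (h : ℕ) (x : S) (a : A) (x' : S) :
    0 ≤ detKernel next h x a x' := by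
  unfold detKernel; split_ifs <;> norm_num

section Deterministic

variable [Fintype S] [DecidableEq S] (next : S → A → S)

lemma sum_detKernel_mul (h : ℕ) (x : S) (a : A) (g : S → ℝ) :
    ∑ x', detKernel next h x a x' * g x' = g (next x a) := by
  simp [detKernel]

lemma sum_detKernel (h : ℕ) (x : S) (a : A) : ∑ x', detKernel next h x a x' = 1 := by
  simpa using sum_detKernel_mul next h x a 1

lemma stateDist_detKernel (x₀ : S) (π : ℕ → S → A) (h : ℕ) (x : S) :
    stateDist (detKernel next) x₀ π h x = if x = trajectory next x₀ π h then 1 else 0 := by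
  induction h generalizing x with
  | zero => rfl
  | succ h ih =>
    simp only [stateDist, ih, ite_mul, one_mul, zero_mul, sum_ite_eq', mem_univ, if_true]
    rfl

lemma sum_stateDist_detKernel_mul (x₀ : S) (π : ℕ → S → A) (h : ℕ) (G : S → ℝ) :
    ∑ x, stateDist (detKernel next) x₀ π h x * G x = G (trajectory next x₀ π h) := by
  simp [stateDist_detKernel]

lemma occupancy_detKernel_nonneg [DecidableEq A] (x₀ : S) (π : ℕ → S → A) (h : ℕ) (x : S)
    (a : A) : 0 ≤ occupancy (detKernel next) x₀ π h x a := by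
  unfold occupancy; rw [stateDist_detKernel]; split_ifs <;> norm_num

lemma sum_occupancy_detKernel_mul [Fintype A] [DecidableEq A] (x₀ : S) (π : ℕ → S → A) (h : ℕ)
    (F : S → A → ℝ) :
    ∑ x, ∑ a, occupancy (detKernel next) x₀ π h x a * F x a
      = F (trajectory next x₀ π h) (π h (trajectory next x₀ π h)) := by
  simp only [occupancy, mul_assoc, ← mul_sum, ite_mul, one_mul, zero_mul, sum_ite_eq',
    mem_univ, if_true]
  exact sum_stateDist_detKernel_mul next x₀ π h fun x => F x (π h x)

end Deterministic

end MDP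

namespace GreedyCounterexample

open MDP

section

/- States `x₀, x_A, x_B, x_C, x_D` are `0, …, 4 : Fin 6` (`5` is never reached) and actions
`L, R, null` are `0, 1, 2 : Fin 3`; outside `x₀` and `x_A` every action acts as `null`. -/
local notation "x₀" => (0 : Fin 6)
local notation "xA" => (1 : Fin 6)
local notation "xB" => (2 : Fin 6)
local notation "xC" => (3 : Fin 6)
local notation "xD" => (4 : Fin 6)
local notation "L" => (0 : Fin 3)
local notation "R" => (1 : Fin 3)
local notation "null" => (2 : Fin 3)

def next (x : Fin 6) (a : Fin 3) : Fin 6 :=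
  if x = x₀ then (if a = L then xA else xB)
  else if x = xA then (if a = L then xC else xD)
  else if x = xB then xD else x

/- The paper's reward for reaching `x_C` is paid on the move `(x_A, L)` into it, since values
only add up the rewards of steps `0` and `1`. -/
def reward (_h : ℕ) (x : Fin 6) (a : Fin 3) : ℝ :=
  if x = xA ∧ a = L then 1 else 0

def qStar : ℕ → Fin 6 → Fin 3 → ℝ
  | 0, x, a => if (x = x₀ ∨ x = xA) ∧ a = L then 1 else 0
  | 1, x, a => if x = xA ∧ a = L then 1 else 0
  | _ + 2, _, _ => 0

def f : ℕ → Fin 6 → Fin 3 → ℝ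
  | 0, x, a => if x = x₀ ∨ x = xA ∧ a = L then 1 else 0
  | 1, x, a => if x = xA ∧ a = L ∨ x = xB then 1 else 0
  | _ + 2, _, _ => 0

def πStar (_h : ℕ) (_x : Fin 6) : Fin 3 := L

def πf (h : ℕ) (x : Fin 6) : Fin 3 :=
  if h = 0 ∧ x = x₀ then R else L

def wBad (_h : ℕ) (x : Fin 6) (a : Fin 3) : ℝ :=
  if x = x₀ ∧ a = R ∨ x = xA ∧ a = L ∨ x = xC ∧ a = null then 1 else 0

end

lemma reward_mem_Icc (h : ℕ) (x : Fin 6) (a : Fin 3) : 0 ≤ reward h x a ∧ reward h x a ≤ 1 := by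
  unfold reward; split_ifs <;> norm_num

lemma qStar_le (h : ℕ) (x : Fin 6) (a : Fin 3) : qStar h x a ≤ qStar h x (πStar h x) := by
  rcases h with _ | _ | h <;> fin_cases x <;> fin_cases a <;> simp [qStar, πStar]

lemma f_le (h : ℕ) (x : Fin 6) (a : Fin 3) : f h x a ≤ f h x (πf h x) := by
  rcases h with _ | _ | h <;> fin_cases x <;> fin_cases a <;> simp [f, πf]

lemma qStar_bellman (h : ℕ) (hh : h < 2) (x : Fin 6) (a : Fin 3) :
    qStar h x a = reward h x a + ∑ x', detKernel next h x a x' *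
      (univ.sup' univ_nonempty fun a' => qStar (h + 1) x' a') := by
  have hsup (x' : Fin 6) : univ.sup' univ_nonempty (fun a' => qStar (h + 1) x' a')
      = qStar (h + 1) x' (πStar (h + 1) x') :=
    sup'_univ_eq_of_forall_le _ (qStar_le (h + 1) x')
  simp only [hsup, sum_detKernel_mul]
  interval_cases h <;> fin_cases x <;> fin_cases a <;> simp [qStar, reward, next, πStar]

lemma qStar_residual_trajectory (h : ℕ) (hh : h < 2) :
    let x := trajectory next 0 πStar h
    qStar h x (πStar h x) - reward h x (πStar h x)
      - ∑ x', detKernel next h x (πStar h x) x' * qStar (h + 1) x' (πStar (h + 1) x') = 0 := by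
  simp only [sum_detKernel_mul]
  interval_cases h <;> simp [qStar, reward, next, πStar, trajectory]

lemma f_residual_trajectory (h : ℕ) (hh : h < 2) :
    let x := trajectory next 0 πStar h
    f h x (πStar h x) - reward h x (πStar h x)
      - ∑ x', detKernel next h x (πStar h x) x' * f (h + 1) x' (πf (h + 1) x') = 0 := by
  simp only [sum_detKernel_mul]
  interval_cases h <;> simp [f, reward, next, πStar, πf, trajectory]

lemma value_πStar :
    ∑ h ∈ range 2, ∑ x, stateDist (detKernel next) 0 πStar h x * reward h x (πStar h x) = 1 := by
  simp only [sum_stateDist_detKernel_mul, sum_range_succ, sum_range_zero]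
  simp [reward, next, πStar, trajectory]

lemma value_πf :
    ∑ h ∈ range 2, ∑ x, stateDist (detKernel next) 0 πf h x * reward h x (πf h x) = 0 := by
  simp only [sum_stateDist_detKernel_mul, sum_range_succ, sum_range_zero]
  simp [reward, next, πf, trajectory]

end GreedyCounterexample

open MDP GreedyCounterexample in
/-- Algorithm-specific counterexample (Section 4.2): there is a finite-horizon
MDP with `H = 2`, a realizable class `F = {Q*, f}`, a realizable weight class
`W = {w*, w_bad}` and a data distribution `d^D` covering `π*`, such that every
`g ∈ F` has zero population average Bellman error
`E_{d^D_h}[w_h·(g_h − T_h g_{h+1})]` for every `w ∈ W` and `h`, both `f` and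
`Q*` attain value `1` at the initial state, yet the greedy policy `π_f` is not
`ε`-optimal for any `ε < 1`.  Values of policies are written via the state
distributions `ρs` (of `π*`) and `ρf` (of `π_f`). -/
theorem stmt10 :
    ∃ (P : ℕ → Fin 6 → Fin 3 → Fin 6 → ℝ) (R : ℕ → Fin 6 → Fin 3 → ℝ)
      (x0 : Fin 6) (Qstar f : ℕ → Fin 6 → Fin 3 → ℝ)
      (πstar πf : ℕ → Fin 6 → Fin 3)
      (dD wstar wbad : ℕ → Fin 6 → Fin 3 → ℝ) (ρs ρf : ℕ → Fin 6 → ℝ),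
      (∀ h x a x', 0 ≤ P h x a x') ∧
      (∀ h x a, ∑ x', P h x a x' = 1) ∧
      (∀ h x a, 0 ≤ R h x a ∧ R h x a ≤ 1) ∧
      (∀ x a, Qstar 2 x a = 0 ∧ f 2 x a = 0) ∧
      -- Q* satisfies the Bellman optimality equations
      (∀ h, h < 2 → ∀ x a, Qstar h x a = R h x a + ∑ x', P h x a x' *
        (univ.sup' univ_nonempty fun a' => Qstar (h + 1) x' a')) ∧
      -- greedy policies
      (∀ h x a, Qstar h x a ≤ Qstar h x (πstar h x)) ∧
      (∀ h x a, f h x a ≤ f h x (πf h x)) ∧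
      -- state distributions of π* and π_f
      (∀ x, ρs 0 x = if x = x0 then 1 else 0) ∧
      (∀ h x', ρs (h + 1) x' = ∑ x, ρs h x * P h x (πstar h x) x') ∧
      (∀ x, ρf 0 x = if x = x0 then 1 else 0) ∧
      (∀ h x', ρf (h + 1) x' = ∑ x, ρf h x * P h x (πf h x) x') ∧
      -- data distribution covering π*, and w* the density ratio of π*
      (∀ h x a, 0 ≤ dD h x a) ∧
      (∀ h, h < 2 → ∀ x, 0 < ρs h x → 0 < dD h x (πstar h x)) ∧
      (∀ h x a, wstar h x a
        = (ρs h x * if a = πstar h x then (1 : ℝ) else 0) / dD h x a) ∧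
      -- zero population average Bellman errors for both members of F under all of W
      (∀ w ∈ ({wstar, wbad} : Set (ℕ → Fin 6 → Fin 3 → ℝ)), ∀ h, h < 2 →
        (∑ x, ∑ a, dD h x a * (w h x a * (Qstar h x a - R h x a
          - ∑ x', P h x a x' * Qstar (h + 1) x' (πstar (h + 1) x')))) = 0 ∧
        (∑ x, ∑ a, dD h x a * (w h x a * (f h x a - R h x a
          - ∑ x', P h x a x' * f (h + 1) x' (πf (h + 1) x')))) = 0) ∧
      -- both attain value 1 at the initial state
      f 0 x0 (πf 0 x0) = 1 ∧ Qstar 0 x0 (πstar 0 x0) = 1 ∧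
      -- but π_f is not ε-optimal for any ε < 1
      (∀ ε : ℝ, ε < 1 →
        ∑ h ∈ range 2, ∑ x, ρf h x * R h x (πf h x)
          < (∑ h ∈ range 2, ∑ x, ρs h x * R h x (πstar h x)) - ε) := by
  refine ⟨detKernel next, reward, 0, qStar, f, πStar, πf, occupancy (detKernel next) 0 πStar,
    fun h x a => (stateDist (detKernel next) 0 πStar h x * if a = πStar h x then 1 else 0)
      / occupancy (detKernel next) 0 πStar h x a,
    wBad, stateDist (detKernel next) 0 πStar, stateDist (detKernel next) 0 πf,
    detKernel_nonneg next, sum_detKernel next, reward_mem_Icc, fun _ _ => ⟨rfl, rfl⟩, qStar_bellman,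
    qStar_le, f_le, fun _ => rfl, fun _ _ => rfl, fun _ => rfl, fun _ _ => rfl,
    occupancy_detKernel_nonneg next 0 πStar, fun h _ x hx => by rwa [occupancy_apply_self],
    fun _ _ _ => rfl, ?_, by simp [f, πf], by simp [qStar, πStar], fun ε hε => ?_⟩
  · rintro w - h hh
    simp only [sum_occupancy_detKernel_mul, qStar_residual_trajectory h hh,
      f_residual_trajectory h hh, mul_zero, and_self]
  · rw [value_πStar, value_πf]
    linarith
end

section
/- Suppose every w ∈ W satisfies w_h ≥ 0 and E_{d^D_h}[w_h] = 1 for all h. Then the approximation error ε_F = min_{f∈F} max_{w∈W} max_h (|E_{d^D_h}[w_h·(f_h − T_h f_{h+1})]| + |f_0(x_0,π_f(x_0)) − Q*_0(x_0,π*(x_0))|) satisfies ε_F ≤ 3 · min_{f∈F} max_h ‖f_h − Q*_h‖_∞. -/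
/-!
Take `f ∈ F` with `‖f_h − Q*_h‖_∞ ≤ ε` for all `h` (also for `h = H`, where both vanish).
The Bellman operator is a sup-norm contraction and `Q*_h = T_h Q*_{h+1}`, so the Bellman residual
`f_h − T_h f_{h+1}` is pointwise at most `2ε`; averaging it against the probability weights
`d^D_h · w_h` keeps it below `2ε`. The greedy values `f_0(x_0, π_f(x_0))` and
`Q*_0(x_0, π*(x_0))` are the maxima of two functions that are `ε`-close, so they differ by at
most `ε`.
-/

open Finset

lemma abs_sup'_sub_sup'_le {ι : Type*} {s : Finset ι} (hs : s.Nonempty) {u v : ι → ℝ} {ε : ℝ}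
    (huv : ∀ i ∈ s, |u i - v i| ≤ ε) : |s.sup' hs u - s.sup' hs v| ≤ ε := by
  rw [abs_sub_le_iff, sub_le_iff_le_add, sub_le_iff_le_add]
  constructor <;> refine sup'_le _ _ fun i hi => ?_
  · linarith [(abs_sub_le_iff.mp (huv i hi)).1, le_sup' v hi]
  · linarith [(abs_sub_le_iff.mp (huv i hi)).2, le_sup' u hi]

lemma abs_sub_le_of_forall_le {ι : Type*} {u v : ι → ℝ} {i j : ι} {ε : ℝ}
    (hi : ∀ k, u k ≤ u i) (hj : ∀ k, v k ≤ v j) (huv : ∀ k, |u k - v k| ≤ ε) :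
    |u i - v j| ≤ ε := by
  rw [abs_le]
  constructor
  · linarith [hi j, (abs_le.mp (huv j)).1]
  · linarith [hj i, (abs_le.mp (huv i)).2]

lemma abs_sum_mul_le_of_sum_eq_one {ι : Type*} {s : Finset ι} {p g : ι → ℝ} {ε : ℝ}
    (hp : ∀ i ∈ s, 0 ≤ p i) (hp1 : ∑ i ∈ s, p i = 1) (hg : ∀ i ∈ s, |g i| ≤ ε) :
    |∑ i ∈ s, p i * g i| ≤ ε :=
  calc |∑ i ∈ s, p i * g i| ≤ ∑ i ∈ s, |p i * g i| := abs_sum_le_sum_abs _ _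
    _ ≤ ∑ i ∈ s, p i * ε := sum_le_sum fun i hi => by
        rw [abs_mul, abs_of_nonneg (hp i hi)]
        exact mul_le_mul_of_nonneg_left (hg i hi) (hp i hi)
    _ = ε := by rw [← sum_mul, hp1, one_mul]

lemma abs_sum_sum_mul_mul_le {X A : Type*} [Fintype X] [Fintype A] {d w r : X → A → ℝ} {ε : ℝ}
    (hd : ∀ x a, 0 ≤ d x a) (hw : ∀ x a, 0 ≤ w x a) (hdw : ∑ x, ∑ a, d x a * w x a = 1)
    (hr : ∀ x a, |r x a| ≤ ε) : |∑ x, ∑ a, d x a * (w x a * r x a)| ≤ ε := by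
  simp only [← mul_assoc]
  rw [← Fintype.sum_prod_type'] at hdw ⊢
  exact abs_sum_mul_le_of_sum_eq_one (fun p _ => mul_nonneg (hd p.1 p.2) (hw p.1 p.2)) hdw
    fun p _ => hr p.1 p.2

section BellmanOperator

variable {X A : Type*} [Fintype X] [Fintype A] [Nonempty A]

/-- `T_h g`, for transition kernels `P` and rewards `R`. -/
noncomputable def bellman (P : ℕ → X → A → X → ℝ) (R : ℕ → X → A → ℝ) (h : ℕ)
    (g : X → A → ℝ) (x : X) (a : A) : ℝ :=
  R h x a + ∑ x', P h x a x' * univ.sup' univ_nonempty (g x')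

variable {P : ℕ → X → A → X → ℝ} {R : ℕ → X → A → ℝ} {h : ℕ} {ε : ℝ}

lemma abs_bellman_sub_bellman_le (hPnn : ∀ x a x', 0 ≤ P h x a x')
    (hP1 : ∀ x a, ∑ x', P h x a x' = 1) {g g' : X → A → ℝ} (hg : ∀ x a, |g x a - g' x a| ≤ ε)
    (x : X) (a : A) : |bellman P R h g x a - bellman P R h g' x a| ≤ ε := by
  simp only [bellman, add_sub_add_left_eq_sub, ← sum_sub_distrib, ← mul_sub]
  exact abs_sum_mul_le_of_sum_eq_one (fun x' _ => hPnn x a x') (hP1 x a)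
    fun x' _ => abs_sup'_sub_sup'_le _ fun a' _ => hg x' a'

lemma abs_sub_bellman_le (hPnn : ∀ x a x', 0 ≤ P h x a x') (hP1 : ∀ x a, ∑ x', P h x a x' = 1)
    {f f' Q Q' : X → A → ℝ} (hQ : ∀ x a, Q x a = bellman P R h Q' x a)
    (hf : ∀ x a, |f x a - Q x a| ≤ ε) (hf' : ∀ x a, |f' x a - Q' x a| ≤ ε) (x : X) (a : A) :
    |f x a - bellman P R h f' x a| ≤ 2 * ε :=
  calc |f x a - bellman P R h f' x a|
      ≤ |f x a - Q x a| + |bellman P R h Q' x a - bellman P R h f' x a| := by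
        rw [← hQ]; exact abs_sub_le _ _ _
    _ ≤ ε + ε := add_le_add (hf x a)
        (abs_bellman_sub_bellman_le hPnn hP1 (fun x a => by rw [abs_sub_comm]; exact hf' x a) x a)
    _ = 2 * ε := by ring

end BellmanOperator

lemma abs_sub_le_sup'_range_sup'_univ {X A : Type*} [Fintype X] [Fintype A] [Nonempty X]
    [Nonempty A] {H : ℕ} (hH : 0 < H) {f g : ℕ → X → A → ℝ} (hf : ∀ x a, f H x a = 0)
    (hg : ∀ x a, g H x a = 0) :
    ∀ h ≤ H, ∀ x a, |f h x a - g h x a| ≤ (range H).sup' (nonempty_range_iff.mpr hH.ne') fun h =>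
      univ.sup' univ_nonempty fun p : X × A => |f h p.1 p.2 - g h p.1 p.2| := by
  set ε := (range H).sup' (nonempty_range_iff.mpr hH.ne') fun h =>
    univ.sup' univ_nonempty fun p : X × A => |f h p.1 p.2 - g h p.1 p.2|
  have hlt : ∀ h < H, ∀ x a, |f h x a - g h x a| ≤ ε := fun h hh x a =>
    (le_sup' (fun p : X × A => |f h p.1 p.2 - g h p.1 p.2|) (mem_univ (x, a))).trans
      (le_sup' (fun h => univ.sup' univ_nonempty fun p : X × A => |f h p.1 p.2 - g h p.1 p.2|)
        (mem_range.mpr hh))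
  intro h hh x a
  rcases hh.lt_or_eq with hh | rfl
  · exact hlt h hh x a
  · rw [hf, hg, sub_zero, abs_zero]
    exact (abs_nonneg _).trans (hlt 0 hH x a)

lemma inf'_le_mul_inf'_of_forall_le {ι : Type*} {s : Finset ι} (hs : s.Nonempty) {φ ψ : ι → ℝ}
    {c : ℝ} (h : ∀ i ∈ s, φ i ≤ c * ψ i) : s.inf' hs φ ≤ c * s.inf' hs ψ := by
  obtain ⟨i, hi, hψ⟩ := exists_mem_eq_inf' hs ψ
  rw [hψ]
  exact (inf'_le φ hi).trans (h i hi)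

/-- The discriminator-based approximation error
`ε_F = min_{f∈F} max_{w∈W} max_h (|E_{d^D_h}[w_h·(f_h − T_h f_{h+1})]| +
|f_0(x_0,π_f(x_0)) − Q*_0(x_0,π*(x_0))|)` is at most three times the best
`ℓ∞` approximation error `min_{f∈F} max_h ‖f_h − Q*_h‖_∞`, provided every
`w ∈ W` is nonnegative with `E_{d^D_h}[w_h] = 1`. -/
theorem stmt12 {X A : Type*} [Fintype X] [Fintype A] [Nonempty X] [Nonempty A]
    (H : ℕ) (hH : 0 < H) (x0 : X)
    (P : ℕ → X → A → X → ℝ) (hPnn : ∀ h x a x', 0 ≤ P h x a x')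
    (hP1 : ∀ h x a, ∑ x', P h x a x' = 1)
    (R : ℕ → X → A → ℝ)
    (dD : ℕ → X → A → ℝ) (hdDnn : ∀ h x a, 0 ≤ dD h x a)
    (Qstar : ℕ → X → A → ℝ) (hQH : ∀ x a, Qstar H x a = 0)
    (hQbell : ∀ h, h < H → ∀ x a, Qstar h x a = R h x a + ∑ x', P h x a x' *
        (univ.sup' univ_nonempty fun a' => Qstar (h + 1) x' a'))
    (F W : Finset (ℕ → X → A → ℝ)) (hF : F.Nonempty) (hW : W.Nonempty)
    (hFH : ∀ f ∈ F, ∀ x a, f H x a = 0)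
    (hWnn : ∀ w ∈ W, ∀ h x a, 0 ≤ w h x a)
    (hWnorm : ∀ w ∈ W, ∀ h, ∑ x, ∑ a, dD h x a * w h x a = 1)
    (gr : (ℕ → X → A → ℝ) → ℕ → X → A)
    (hgr : ∀ (f : ℕ → X → A → ℝ) (h : ℕ) (x : X) (a : A), f h x a ≤ f h x (gr f h x)) :
    F.inf' hF (fun f => W.sup' hW fun w =>
        (range H).sup' (nonempty_range_iff.mpr hH.ne') fun h =>
          |∑ x, ∑ a, dD h x a * (w h x a *
            (f h x a - (R h x a + ∑ x', P h x a x' *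
              (univ.sup' univ_nonempty fun a' => f (h + 1) x' a'))))| +
          |f 0 x0 (gr f 0 x0) - Qstar 0 x0 (gr Qstar 0 x0)|)
      ≤ 3 * F.inf' hF (fun f =>
          (range H).sup' (nonempty_range_iff.mpr hH.ne') fun h =>
            univ.sup' univ_nonempty fun p : X × A =>
              |f h p.1 p.2 - Qstar h p.1 p.2|) := by
  refine inf'_le_mul_inf'_of_forall_le hF fun f hf => sup'_le _ _ fun w hw =>
    sup'_le _ _ fun h hh => ?_
  have hclose := abs_sub_le_sup'_range_sup'_univ hH (hFH f hf) hQH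
  have hres := abs_sub_bellman_le (hPnn h) (hP1 h) (hQbell h (mem_range.mp hh))
    (hclose h (mem_range.mp hh).le) (hclose (h + 1) (mem_range.mp hh))
  have hresidual := abs_sum_sum_mul_mul_le (hdDnn h) (hWnn w hw h) (hWnorm w hw h) hres
  have hgreedy := abs_sub_le_of_forall_le (hgr f 0 x0) (hgr Qstar 0 x0) (hclose 0 hH.le x0)
  unfold bellman at hresidual
  linarith
end

section
/- Under boundedness (f_h ∈ [0,H−h], ‖w_h‖_∞ ≤ C) and n ≥ 8C²H⁴ log(2|F||W|H/δ)/ε², with probability 1−δ, running PABC with α = ε/(2H) + ε_F and C_gap = 0 outputs f̂ satisfying |f̂_0(x_0, π_{f̂}(x_0)) − v*| ≤ ε + H·ε_F + H·ε_W, where ε_F and ε_W are the discriminator-based approximation errors of F and W respectively. -/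
open MeasureTheory Finset
open Real

/-- The empirical MIS loss `L_D(f,w,h)` computed from a dataset
`ω : Fin H × Fin n → X × A × X`; `gf` is the greedy policy of `f`. -/
noncomputable def empLoss14 {X A : Type*} (H n : ℕ) (R : ℕ → X → A → ℝ)
    (ω : Fin H × Fin n → X × A × X)
    (f w : ℕ → X → A → ℝ) (gf : ℕ → X → A) (h : Fin H) : ℝ :=
  (n : ℝ)⁻¹ * ∑ i : Fin n,
    w h.val (ω (h, i)).1 (ω (h, i)).2.1 *
      (f h.val (ω (h, i)).1 (ω (h, i)).2.1 - R h.val (ω (h, i)).1 (ω (h, i)).2.1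
        - f (h.val + 1) (ω (h, i)).2.2 (gf (h.val + 1) (ω (h, i)).2.2))


/-- Hoeffding's lemma, key scalar inequality. -/
lemma keyIneq14 {p : ℝ} (hp0 : 0 ≤ p) (hp1 : p ≤ 1) (h : ℝ) :
    (1 - p) * Real.exp (-p * h) + p * Real.exp ((1 - p) * h) ≤ Real.exp (h ^ 2 / 8) := by
  set D : ℝ → ℝ := fun t => 1 - p + p * Real.exp t with hD
  have hDpos : ∀ t, 0 < D t := by
    intro t
    rcases eq_or_lt_of_le hp0 with h0 | h0
    · simp only [hD, ← h0]; norm_num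
    · have : 0 < p * Real.exp t := mul_pos h0 (Real.exp_pos t)
      simp only [hD]; linarith
  -- G t = t^2/8 + p t - log (D t) ≥ 0
  set G : ℝ → ℝ := fun t => t ^ 2 / 8 + p * t - Real.log (D t) with hG
  set G1 : ℝ → ℝ := fun t => t / 4 + p - p * Real.exp t / D t with hG1
  have hDder : ∀ t, HasDerivAt D (p * Real.exp t) t := by
    intro t
    exact ((Real.hasDerivAt_exp t).const_mul p).const_add (1 - p)
  have hGder : ∀ t, HasDerivAt G (G1 t) t := by
    intro t
    have h1 : HasDerivAt (fun t => Real.log (D t)) (p * Real.exp t / D t) t :=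
      (hDder t).log (hDpos t).ne'
    have h2 : HasDerivAt (fun t : ℝ => t ^ 2 / 8 + p * t) (t / 4 + p) t := by
      have := ((hasDerivAt_pow 2 t).div_const 8).add ((hasDerivAt_id t).const_mul p)
      exact this.congr_deriv (by ring)
    exact h2.sub h1
  have hG1der : ∀ t, HasDerivAt G1 (1 / 4 - (p * Real.exp t * (1 - p)) / (D t) ^ 2) t := by
    intro t
    have h1 : HasDerivAt (fun t => p * Real.exp t / D t)
        ((p * Real.exp t * D t - p * Real.exp t * (p * Real.exp t)) / (D t) ^ 2) t :=
      ((Real.hasDerivAt_exp t).const_mul p).div (hDder t) (hDpos t).ne'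
    have h2 : HasDerivAt (fun t : ℝ => t / 4 + p) (1 / 4) t := by
      simpa using ((hasDerivAt_id t).div_const 4).add_const p
    have h3 := h2.sub h1
    have : (p * Real.exp t * D t - p * Real.exp t * (p * Real.exp t)) / (D t) ^ 2
        = (p * Real.exp t * (1 - p)) / (D t) ^ 2 := by
      congr 1; simp only [hD]; ring
    rw [this] at h3
    exact h3
  have hG2nn : ∀ t, 0 ≤ 1 / 4 - (p * Real.exp t * (1 - p)) / (D t) ^ 2 := by
    intro t
    set s : ℝ := p * Real.exp t / D t with hs
    have hD2 : (0:ℝ) < (D t) ^ 2 := pow_pos (hDpos t) 2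
    have hDne : D t ≠ 0 := (hDpos t).ne'
    have h1 : 1 - s = (1 - p) / D t := by
      rw [hs, eq_div_iff hDne, sub_mul, div_mul_cancel₀ _ hDne]
      simp only [hD]; ring
    have hkey : (p * Real.exp t * (1 - p)) / (D t) ^ 2 = s * (1 - s) := by
      rw [h1, hs, div_mul_div_comm, ← sq]
    rw [hkey]; nlinarith [sq_nonneg (s - 1/2)]
  have hG1mono : Monotone G1 := by
    apply monotone_of_deriv_nonneg
    · exact fun t => (hG1der t).differentiableAt
    · intro t; rw [(hG1der t).deriv]; exact hG2nn t
  have hG10 : G1 0 = 0 := by simp [hG1, hD]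
  have hGnn : ∀ t, 0 ≤ G t := by
    have hG0 : G 0 = 0 := by simp [hG, hD]
    intro t
    rcases lt_trichotomy t 0 with ht | rfl | ht
    · obtain ⟨c, hc, hceq⟩ := exists_hasDerivAt_eq_slope G G1 ht
        (fun x _ => (hGder x).continuousAt.continuousWithinAt) (fun x _ => hGder x)
      have hc1 : G1 c ≤ 0 := hG10 ▸ hG1mono hc.2.le
      have : (G 0 - G t) / (0 - t) ≤ 0 := hceq ▸ hc1
      rw [hG0] at this
      have h0t : (0:ℝ) < 0 - t := by linarith
      have := (div_le_iff₀ h0t).mp this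
      linarith
    · simp [hG0]
    · obtain ⟨c, hc, hceq⟩ := exists_hasDerivAt_eq_slope G G1 ht
        (fun x _ => (hGder x).continuousAt.continuousWithinAt) (fun x _ => hGder x)
      have hc1 : 0 ≤ G1 c := hG10 ▸ hG1mono hc.1.le
      have : 0 ≤ (G t - G 0) / (t - 0) := hceq ▸ hc1
      rw [hG0] at this
      have ht' : (0:ℝ) < t - 0 := by linarith
      have := (le_div_iff₀ ht').mp this
      linarith
  -- conclude
  have hlog : Real.log (D h) ≤ h ^ 2 / 8 + p * h := by have := hGnn h; simp only [hG] at this; linarith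
  have hDh : D h ≤ Real.exp (h ^ 2 / 8 + p * h) := by
    calc D h = Real.exp (Real.log (D h)) := (Real.exp_log (hDpos h)).symm
    _ ≤ _ := Real.exp_le_exp.2 hlog
  have hexp : (1 - p) * Real.exp (-p * h) + p * Real.exp ((1 - p) * h)
      = Real.exp (-p * h) * D h := by
    simp only [hD]
    rw [sub_mul, one_mul, mul_add]
    rw [show (1 - p) * h = h + (-p * h) by ring, Real.exp_add]
    ring
  rw [hexp]
  calc Real.exp (-p * h) * D h ≤ Real.exp (-p * h) * Real.exp (h ^ 2 / 8 + p * h) := by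
        exact mul_le_mul_of_nonneg_left hDh (Real.exp_pos _).le
  _ = Real.exp (h ^ 2 / 8) := by rw [← Real.exp_add]; ring_nf

/-- Hoeffding's lemma for a finite distribution, symmetric interval `[-B,B]`. -/
lemma finMgf14 {Q : Type*} [Fintype Q] (q g : Q → ℝ) (hq : ∀ x, 0 ≤ q x)
    (hq1 : ∑ x, q x = 1) (B lam : ℝ) (hB : 0 < B) (hg : ∀ x, |g x| ≤ B) :
    ∑ x, q x * Real.exp (lam * (g x - ∑ y, q y * g y)) ≤ Real.exp (lam ^ 2 * B ^ 2 / 2) := by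
  set m : ℝ := ∑ y, q y * g y with hm
  have hBne : (2 : ℝ) * B ≠ 0 := by positivity
  have hmB : |m| ≤ B := by
    calc |m| ≤ ∑ y, |q y * g y| := Finset.abs_sum_le_sum_abs _ _
    _ ≤ ∑ y, q y * B := by
        apply Finset.sum_le_sum; intro y _
        rw [abs_mul, abs_of_nonneg (hq y)]
        exact mul_le_mul_of_nonneg_left (hg y) (hq y)
    _ = B := by rw [← Finset.sum_mul, hq1, one_mul]
  have hmB' := abs_le.mp hmB
  -- pointwise convexity bound
  have hconv : ∀ x, Real.exp (lam * g x) ≤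
      ((B - g x) / (2 * B)) * Real.exp (-(lam * B)) + ((g x + B) / (2 * B)) * Real.exp (lam * B) := by
    intro x
    have hgx := abs_le.mp (hg x)
    have ha : 0 ≤ (B - g x) / (2 * B) := by
      apply div_nonneg (by linarith [hgx.2]) (by linarith)
    have hb : 0 ≤ (g x + B) / (2 * B) := by
      apply div_nonneg (by linarith [hgx.1]) (by linarith)
    have hab : (B - g x) / (2 * B) + (g x + B) / (2 * B) = 1 := by
      field_simp; ring
    have h2 := convexOn_exp.2 (Set.mem_univ (-(lam * B))) (Set.mem_univ (lam * B)) ha hb hab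
    have harg : ((B - g x) / (2 * B)) • (-(lam * B)) + ((g x + B) / (2 * B)) • (lam * B)
        = lam * g x := by
      simp only [smul_eq_mul]
      rw [div_mul_eq_mul_div, div_mul_eq_mul_div, ← add_div,
        show (B - g x) * -(lam * B) + (g x + B) * (lam * B) = lam * g x * (2 * B) by ring,
        mul_div_assoc, div_self hBne, mul_one]
    rw [harg] at h2
    simpa [smul_eq_mul] using h2
  -- summed bound
  have hsum : ∑ x, q x * Real.exp (lam * g x) ≤
      ((B - m) / (2 * B)) * Real.exp (-(lam * B)) + ((m + B) / (2 * B)) * Real.exp (lam * B) := by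
    calc ∑ x, q x * Real.exp (lam * g x)
        ≤ ∑ x, q x * (((B - g x) / (2 * B)) * Real.exp (-(lam * B))
            + ((g x + B) / (2 * B)) * Real.exp (lam * B)) := by
          apply Finset.sum_le_sum; intro x _
          exact mul_le_mul_of_nonneg_left (hconv x) (hq x)
    _ = ((B - m) / (2 * B)) * Real.exp (-(lam * B)) + ((m + B) / (2 * B)) * Real.exp (lam * B) := by
          have e4 : ∀ x ∈ (univ : Finset Q), q x * (((B - g x) / (2 * B)) * Real.exp (-(lam * B))
              + ((g x + B) / (2 * B)) * Real.exp (lam * B))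
              = (q x * B - q x * g x) * (Real.exp (-(lam * B)) / (2 * B))
                + (q x * g x + q x * B) * (Real.exp (lam * B) / (2 * B)) := by
            intro x _; field_simp
          rw [Finset.sum_congr rfl e4, Finset.sum_add_distrib, ← Finset.sum_mul, ← Finset.sum_mul,
            Finset.sum_sub_distrib, Finset.sum_add_distrib, ← Finset.sum_mul, hq1, one_mul, ← hm]
          field_simp
  -- key inequality
  set p : ℝ := (m + B) / (2 * B) with hp
  have hp0 : 0 ≤ p := by apply div_nonneg (by linarith [hmB'.1]) (by linarith)
  have hp1 : p ≤ 1 := by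
    rw [hp, div_le_one (by linarith : (0:ℝ) < 2 * B)]; linarith [hmB'.2]
  have hkey := keyIneq14 hp0 hp1 (2 * lam * B)
  have e1 : -p * (2 * lam * B) = -(lam * B) - lam * m := by
    rw [hp]; field_simp; ring
  have e2 : (1 - p) * (2 * lam * B) = lam * B - lam * m := by
    rw [hp]; field_simp; ring
  have e3 : (1 : ℝ) - p = (B - m) / (2 * B) := by
    rw [hp]; field_simp; ring
  have lhs_eq : ∑ x, q x * Real.exp (lam * (g x - m))
      = Real.exp (-(lam * m)) * ∑ x, q x * Real.exp (lam * g x) := by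
    rw [Finset.mul_sum]
    apply Finset.sum_congr rfl; intro x _
    rw [mul_sub, Real.exp_sub, Real.exp_neg, div_eq_mul_inv]
    ring
  rw [lhs_eq]
  calc Real.exp (-(lam * m)) * ∑ x, q x * Real.exp (lam * g x)
      ≤ Real.exp (-(lam * m)) * (((B - m) / (2 * B)) * Real.exp (-(lam * B))
          + ((m + B) / (2 * B)) * Real.exp (lam * B)) :=
        mul_le_mul_of_nonneg_left hsum (Real.exp_pos _).le
  _ = (1 - p) * Real.exp (-p * (2 * lam * B)) + p * Real.exp ((1 - p) * (2 * lam * B)) := by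
        rw [e1, e2, e3]
        rw [show -(lam * B) - lam * m = -(lam * m) + -(lam * B) by ring,
          show lam * B - lam * m = -(lam * m) + lam * B by ring,
          Real.exp_add, Real.exp_add]
        ring
  _ ≤ Real.exp ((2 * lam * B) ^ 2 / 8) := hkey
  _ = Real.exp (lam ^ 2 * B ^ 2 / 2) := by congr 1; ring

/-- One-sided Chernoff bound over the product sample space, for a statistic
depending only on row `h0`. -/
lemma chernoff14 {Q : Type*} [Fintype Q] [DecidableEq Q] {H n : ℕ} (hn : 0 < n)
    (p : Fin H → Q → ℝ) (hp : ∀ h x, 0 ≤ p h x) (hp1 : ∀ h, ∑ x, p h x = 1)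
    (h0 : Fin H) (g : Q → ℝ) (B : ℝ) (hB : 0 < B) (hg : ∀ x, |g x| ≤ B)
    (t : ℝ) (ht : 0 ≤ t) :
    ∑ ω ∈ (univ : Finset (Fin H × Fin n → Q)).filter
        (fun ω => (n : ℝ) * t ≤ ∑ i : Fin n, (g (ω (h0, i)) - ∑ y, p h0 y * g y)),
      ∏ j : Fin H × Fin n, p j.1 (ω j)
      ≤ Real.exp (-((n : ℝ) * t ^ 2 / (2 * B ^ 2))) := by
  classical
  set m : ℝ := ∑ y, p h0 y * g y with hm
  set lam : ℝ := t / B ^ 2 with hlam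
  have hlam0 : 0 ≤ lam := div_nonneg ht (by positivity)
  set e : Fin H × Fin n → Q → ℝ :=
    fun j x => if j.1 = h0 then Real.exp (lam * (g x - m)) else 1 with he
  have hWnn : ∀ ω : Fin H × Fin n → Q, 0 ≤ ∏ j : Fin H × Fin n, p j.1 (ω j) :=
    fun ω => Finset.prod_nonneg fun j _ => hp _ _
  -- exp of the centered sum factorizes over coordinates
  have hfac : ∀ ω : Fin H × Fin n → Q,
      Real.exp (lam * ∑ i : Fin n, (g (ω (h0, i)) - m)) = ∏ j : Fin H × Fin n, e j (ω j) := by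
    intro ω
    rw [Fintype.prod_prod_type]
    have : ∀ h : Fin H, (∏ i : Fin n, e (h, i) (ω (h, i)))
        = if h = h0 then ∏ i : Fin n, Real.exp (lam * (g (ω (h, i)) - m)) else 1 := by
      intro h
      by_cases hh : h = h0 <;> simp [he, hh]
    rw [Finset.prod_congr rfl (fun h _ => this h), Finset.prod_ite_eq' univ h0]
    simp only [Finset.mem_univ, if_true]
    rw [← Real.exp_sum, Finset.mul_sum]
  calc ∑ ω ∈ (univ : Finset (Fin H × Fin n → Q)).filter
        (fun ω => (n : ℝ) * t ≤ ∑ i : Fin n, (g (ω (h0, i)) - m)),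
      ∏ j : Fin H × Fin n, p j.1 (ω j)
      ≤ ∑ ω ∈ (univ : Finset (Fin H × Fin n → Q)).filter
        (fun ω => (n : ℝ) * t ≤ ∑ i : Fin n, (g (ω (h0, i)) - m)),
        (∏ j : Fin H × Fin n, p j.1 (ω j)) *
          (Real.exp (-(lam * ((n : ℝ) * t))) * Real.exp (lam * ∑ i : Fin n, (g (ω (h0, i)) - m))) := by
        apply Finset.sum_le_sum
        intro ω hω
        rw [Finset.mem_filter] at hω
        have h1 : (1 : ℝ) ≤ Real.exp (-(lam * ((n : ℝ) * t))) *
            Real.exp (lam * ∑ i : Fin n, (g (ω (h0, i)) - m)) := by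
          rw [← Real.exp_add]
          refine Real.one_le_exp ?_
          have := mul_le_mul_of_nonneg_left hω.2 hlam0
          linarith
        nlinarith [hWnn ω, h1]
  _ ≤ ∑ ω : Fin H × Fin n → Q,
        (∏ j : Fin H × Fin n, p j.1 (ω j)) *
          (Real.exp (-(lam * ((n : ℝ) * t))) * Real.exp (lam * ∑ i : Fin n, (g (ω (h0, i)) - m))) := by
        apply Finset.sum_le_sum_of_subset_of_nonneg (Finset.filter_subset _ _)
        intro ω _ _
        have := hWnn ω
        positivity
  _ = Real.exp (-(lam * ((n : ℝ) * t))) *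
        ∑ ω : Fin H × Fin n → Q, ∏ j : Fin H × Fin n, (p j.1 (ω j) * e j (ω j)) := by
        rw [Finset.mul_sum]
        apply Finset.sum_congr rfl
        intro ω _
        rw [hfac ω, mul_left_comm, ← Finset.prod_mul_distrib]
  _ = Real.exp (-(lam * ((n : ℝ) * t))) *
        ∏ j : Fin H × Fin n, ∑ x : Q, p j.1 x * e j x := by
        congr 1
        have := Finset.sum_prod_piFinset (univ : Finset Q)
          (fun (j : Fin H × Fin n) (x : Q) => p j.1 x * e j x)
        rw [← this]
        apply Finset.sum_nbij' (fun ω => ω) (fun ω => ω) <;>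
          simp [Fintype.mem_piFinset]
  _ ≤ Real.exp (-(lam * ((n : ℝ) * t))) *
        ∏ j : Fin H × Fin n, (if j.1 = h0 then Real.exp (lam ^ 2 * B ^ 2 / 2) else 1) := by
        apply mul_le_mul_of_nonneg_left _ (Real.exp_pos _).le
        apply Finset.prod_le_prod
        · intro j _
          apply Finset.sum_nonneg
          intro x _
          have : 0 ≤ e j x := by
            by_cases hh : j.1 = h0 <;> simp [he, hh, (Real.exp_pos _).le]
          exact mul_nonneg (hp _ _) this
        · intro j _
          by_cases hh : j.1 = h0
          · simp only [he, hh, if_true]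
            exact finMgf14 (p h0) g (hp h0) (hp1 h0) B lam hB hg
          · simp only [he, hh, if_false, mul_one]
            rw [hp1 j.1]
  _ = Real.exp (-((n : ℝ) * t ^ 2 / (2 * B ^ 2))) := by
        rw [Fintype.prod_prod_type]
        have : ∀ h : Fin H, (∏ _i : Fin n,
            (if h = h0 then Real.exp (lam ^ 2 * B ^ 2 / 2) else 1))
            = if h = h0 then Real.exp (lam ^ 2 * B ^ 2 / 2) ^ n else 1 := by
          intro h; by_cases hh : h = h0 <;> simp [hh]
        rw [Finset.prod_congr rfl (fun h _ => this h), Finset.prod_ite_eq' univ h0]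
        simp only [Finset.mem_univ, if_true]
        rw [← Real.exp_nat_mul, ← Real.exp_add]
        congr 1
        rw [hlam]
        field_simp
        ring

lemma sumUnionLe14 {β : Type*} [DecidableEq β] (s t : Finset β) (f : β → ℝ)
    (hf : ∀ b, 0 ≤ f b) : ∑ b ∈ s ∪ t, f b ≤ ∑ b ∈ s, f b + ∑ b ∈ t, f b := by
  rw [← Finset.sum_union_inter]
  have : 0 ≤ ∑ b ∈ s ∩ t, f b := Finset.sum_nonneg fun b _ => hf b
  linarith

lemma sumBiUnionLe14 {α β : Type*} [DecidableEq β] (s : Finset α) (t : α → Finset β)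
    (f : β → ℝ) (hf : ∀ b, 0 ≤ f b) :
    ∑ b ∈ s.biUnion t, f b ≤ ∑ a ∈ s, ∑ b ∈ t a, f b := by
  classical
  induction s using Finset.induction with
  | empty => simp
  | @insert a s ha ih =>
      rw [Finset.biUnion_insert, Finset.sum_insert ha]
      calc ∑ b ∈ t a ∪ s.biUnion t, f b ≤ ∑ b ∈ t a, f b + ∑ b ∈ s.biUnion t, f b :=
            sumUnionLe14 _ _ f hf
      _ ≤ ∑ b ∈ t a, f b + ∑ a' ∈ s, ∑ b ∈ t a', f b := by linarith

set_option maxHeartbeats 2000000 in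
/-- Theorem 5.1 (robust version of the `v*`-identification result): without
assuming realizability, under boundedness and
`n ≥ 8C²H⁴log(2|F||W|H/δ)/ε²`, with probability `1−δ`, running PABC with
`C_gap = 0` and `α = ε/(2H) + ε_F` outputs `f̂` with
`|f̂_0(x_0,π_{f̂}(x_0)) − v*| ≤ ε + H·ε_F + H·ε_W`, where `ε_F`, `ε_W` are the
discriminator-based approximation errors of the classes `F` and `W`. -/
theorem stmt14 {X A : Type*} [Fintype X] [Fintype A] [Nonempty X] [Nonempty A]
    [DecidableEq X] [DecidableEq A] [MeasurableSpace X] [MeasurableSpace A]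
    (H n : ℕ) (hH : 0 < H) (hn : 0 < n) (x0 : X)
    (P : ℕ → X → A → X → ℝ) (hPnn : ∀ h x a x', 0 ≤ P h x a x')
    (hP1 : ∀ h x a, ∑ x', P h x a x' = 1)
    (R : ℕ → X → A → ℝ) (hR : ∀ h x a, 0 ≤ R h x a ∧ R h x a ≤ 1)
    (dD : ℕ → X → A → ℝ) (hdDnn : ∀ h x a, 0 ≤ dD h x a)
    (hdD1 : ∀ h, ∑ x, ∑ a, dD h x a = 1)
    (F W : Finset (ℕ → X → A → ℝ)) (hF : F.Nonempty) (hW : W.Nonempty)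
    (gr : (ℕ → X → A → ℝ) → ℕ → X → A)
    (hgr : ∀ (f : ℕ → X → A → ℝ) (h : ℕ) (x : X) (a : A), f h x a ≤ f h x (gr f h x))
    -- the optimal value function `Q*` and its Bellman optimality equations
    (Qstar : ℕ → X → A → ℝ) (hQH : ∀ x a, Qstar H x a = 0)
    (hQbell : ∀ h, h < H → ∀ x a, Qstar h x a = R h x a + ∑ x', P h x a x' *
        (univ.sup' univ_nonempty fun a' => Qstar (h + 1) x' a'))
    -- state distribution of `π* = gr Q*`
    (ρ : ℕ → X → ℝ)
    (hρ0 : ∀ x, ρ 0 x = if x = x0 then 1 else 0)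
    (hρ : ∀ h x', ρ (h + 1) x' = ∑ x, ρ h x * P h x (gr Qstar h x) x')
    -- boundedness
    (C : ℝ) (hC : 0 < C)
    (hFb : ∀ f ∈ F, ∀ h x a, 0 ≤ f h x a ∧ f h x a ≤ (H : ℝ) - h)
    (hWb : ∀ w ∈ W, ∀ h x a, |w h x a| ≤ C)
    -- discriminator-based approximation errors of `F` and `W`
    (εF εW : ℝ)
    (hεF : εF = F.inf' hF fun f => W.sup' hW fun w =>
      (range H).sup' (nonempty_range_iff.mpr hH.ne') fun h =>
        |∑ x, ∑ a, dD h x a * (w h x a *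
          (f h x a - (R h x a + ∑ x', P h x a x' *
            (univ.sup' univ_nonempty fun a' => f (h + 1) x' a'))))| +
        |f 0 x0 (gr f 0 x0) - Qstar 0 x0 (gr Qstar 0 x0)|)
    (hεW : εW = W.inf' hW fun w => F.sup' hF fun f =>
      (range H).sup' (nonempty_range_iff.mpr hH.ne') fun h =>
        |(∑ x, ∑ a, dD h x a * (w h x a *
            (f h x a - (R h x a + ∑ x', P h x a x' *
              (univ.sup' univ_nonempty fun a' => f (h + 1) x' a')))))
          - ∑ x, ∑ a, (ρ h x * if a = gr Qstar h x then (1 : ℝ) else 0) *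
              (f h x a - (R h x a + ∑ x', P h x a x' *
                (univ.sup' univ_nonempty fun a' => f (h + 1) x' a')))|)
    -- accuracy parameters and sample size
    (ε δ : ℝ) (hε : 0 < ε) (hδ : 0 < δ) (hδ1 : δ < 1)
    (hsample : 8 * C ^ 2 * H ^ 4 * Real.log (2 * F.card * W.card * H / δ) / ε ^ 2
      ≤ (n : ℝ))
    -- law of a single sample `(x_h, a_h, x_{h+1})` at step `h`
    (μ1 : ℕ → Measure (X × A × X)) [∀ h, IsProbabilityMeasure (μ1 h)]
    (hμ1 : ∀ h p, μ1 h {p}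
      = ENNReal.ofReal (dD h p.1 p.2.1 * P h p.1 p.2.1 p.2.2)) :
    ENNReal.ofReal (1 - δ) ≤
      (Measure.pi fun hi : Fin H × Fin n => μ1 hi.1.val)
        {ω | ∀ fhat ∈ F,
          ((∀ w ∈ W, ∀ h : Fin H,
              |empLoss14 H n R ω fhat w (gr fhat) h| ≤ ε / (2 * H) + εF) ∧
            (∀ f ∈ F,
              (∀ w ∈ W, ∀ h : Fin H,
                |empLoss14 H n R ω f w (gr f) h| ≤ ε / (2 * H) + εF) →
              fhat 0 x0 (gr fhat 0 x0) ≤ f 0 x0 (gr f 0 x0))) →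
          |fhat 0 x0 (gr fhat 0 x0) - Qstar 0 x0 (gr Qstar 0 x0)|
            ≤ ε + H * εF + H * εW} := by
    classical
  have hHR : (0 : ℝ) < H := by exact_mod_cast hH
  have hH1 : (1 : ℝ) ≤ H := by exact_mod_cast hH
  have hnR : (0 : ℝ) < n := by exact_mod_cast hn
  set t : ℝ := ε / (2 * (H : ℝ)) with htdef
  have ht0 : 0 < t := by positivity
  -- basic abbreviations
  set TT : (ℕ → X → A → ℝ) → ℕ → X → A → ℝ := fun f k x a =>
    R k x a + ∑ x', P k x a x' * (univ.sup' univ_nonempty fun a' => f (k + 1) x' a') with hTTdef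
  set mm : (ℕ → X → A → ℝ) → (ℕ → X → A → ℝ) → ℕ → ℝ := fun f w k =>
    ∑ x, ∑ a, dD k x a * (w k x a * (f k x a - TT f k x a)) with hmmdef
  set gg : (ℕ → X → A → ℝ) → (ℕ → X → A → ℝ) → ℕ → (X × A × X) → ℝ := fun f w k q =>
    w k q.1 q.2.1 * (f k q.1 q.2.1 - R k q.1 q.2.1
      - f (k + 1) q.2.2 (gr f (k + 1) q.2.2)) with hggdef
  set Dl : (ℕ → X → A → ℝ) → ℕ → ℝ := fun f k =>
    ∑ x, ρ k x * (f k x (gr Qstar k x) - TT f k x (gr Qstar k x)) with hDldef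
  set pr : Fin H → (X × A × X) → ℝ := fun h q =>
    dD h.val q.1 q.2.1 * P h.val q.1 q.2.1 q.2.2 with hprdef
  -- greedy action attains the sup
  have hVsup : ∀ (f : ℕ → X → A → ℝ) (k : ℕ) (x : X),
      (univ.sup' univ_nonempty fun a' => f k x a') = f k x (gr f k x) := by
    intro f k x
    refine le_antisymm (Finset.sup'_le _ _ fun a _ => hgr f k x a) ?_
    exact Finset.le_sup' (fun a' => f k x a') (mem_univ (gr f k x))
  -- pr is a probability vector
  have hprnn : ∀ (h : Fin H) q, 0 ≤ pr h q := fun h q =>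
    mul_nonneg (hdDnn _ _ _) (hPnn _ _ _ _)
  have hpr1 : ∀ h : Fin H, ∑ q, pr h q = 1 := by
    intro h
    rw [Fintype.sum_prod_type]
    have : ∀ x : X, ∑ q : A × X, pr h (x, q) = ∑ a, dD h.val x a := by
      intro x
      rw [Fintype.sum_prod_type]
      apply Finset.sum_congr rfl
      intro a _
      simp only [hprdef]
      rw [← Finset.mul_sum, hP1, mul_one]
    rw [Finset.sum_congr rfl fun x _ => this x, hdD1]
  -- the mean of gg equals mm
  have hmean : ∀ f w (h : Fin H), ∑ q, pr h q * gg f w h.val q = mm f w h.val := by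
    intro f w h
    simp only [hmmdef]
    rw [Fintype.sum_prod_type]
    apply Finset.sum_congr rfl
    intro x _
    rw [Fintype.sum_prod_type]
    apply Finset.sum_congr rfl
    intro a _
    simp only [hprdef, hggdef, hTTdef, hVsup]
    have e : ∀ x' ∈ (univ : Finset X),
        dD (h.val) x a * P (h.val) x a x' *
          (w (h.val) x a * (f (h.val) x a - R (h.val) x a
            - f (h.val + 1) x' (gr f (h.val + 1) x')))
        = (dD (h.val) x a * (w (h.val) x a * (f (h.val) x a - R (h.val) x a))) * P (h.val) x a x'
          - (dD (h.val) x a * w (h.val) x a)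
              * (P (h.val) x a x' * f (h.val + 1) x' (gr f (h.val + 1) x')) := by
      intro x' _; ring
    rw [Finset.sum_congr rfl e, Finset.sum_sub_distrib, ← Finset.mul_sum, ← Finset.mul_sum,
      hP1, mul_one]
    ring
  -- empirical loss identity
  have hemp : ∀ (ω : Fin H × Fin n → X × A × X) f w (h : Fin H),
      empLoss14 H n R ω f w (gr f) h = (n : ℝ)⁻¹ * ∑ i : Fin n, gg f w h.val (ω (h, i)) := by
    intro ω f w h; rfl
  -- bound on gg
  have hggb : ∀ f ∈ F, ∀ w ∈ W, ∀ h : Fin H, ∀ q, |gg f w h.val q| ≤ C * H := by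
    intro f hf w hw h q
    simp only [hggdef]
    rw [abs_mul]
    have h1 := hWb w hw h.val q.1 q.2.1
    have h2 := hFb f hf h.val q.1 q.2.1
    have h3 := hFb f hf (h.val + 1) q.2.2 (gr f (h.val + 1) q.2.2)
    have h4 := hR h.val q.1 q.2.1
    have hcast : ((h.val : ℝ)) + 1 ≤ (H : ℝ) := by exact_mod_cast h.isLt
    have hc0 : (0 : ℝ) ≤ (h.val : ℝ) := Nat.cast_nonneg _
    have h3' : f (h.val + 1) q.2.2 (gr f (h.val + 1) q.2.2) ≤ (H : ℝ) - ((h.val : ℝ) + 1) := by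
      have := h3.2; push_cast at this ⊢; linarith
    have hinner : |f (h.val) q.1 q.2.1 - R (h.val) q.1 q.2.1
        - f (h.val + 1) q.2.2 (gr f (h.val + 1) q.2.2)| ≤ (H : ℝ) := by
      rw [abs_le]
      constructor
      · linarith [h2.1, h3.1, h4.2]
      · linarith [h2.2, h3.1, h4.1]
    exact mul_le_mul h1 hinner (abs_nonneg _) hC.le
  -- nonnegativity of ρ
  have hρnn : ∀ k x, 0 ≤ ρ k x := by
    intro k
    induction k with
    | zero => intro x; rw [hρ0]; split <;> norm_num
    | succ k ih =>
        intro x'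
        rw [hρ]
        exact Finset.sum_nonneg fun x _ => mul_nonneg (ih x) (hPnn _ _ _ _)
  -- εF and εW are nonnegative
  have hεF0 : 0 ≤ εF := by
    rw [hεF]
    apply Finset.le_inf'
    intro f hfF
    obtain ⟨w0, hw0⟩ := hW
    exact Finset.le_sup'_of_le _ hw0
      (Finset.le_sup'_of_le _ (mem_range.mpr hH) (by positivity))
  have hεW0 : 0 ≤ εW := by
    rw [hεW]
    apply Finset.le_inf'
    intro w hwW
    obtain ⟨f0, hf0⟩ := hF
    exact Finset.le_sup'_of_le _ hf0
      (Finset.le_sup'_of_le _ (mem_range.mpr hH) (abs_nonneg _))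
  -- telescoping
  have htel : ∀ f ∈ F, ∀ j, j ≤ H →
      ∑ x, ρ (H - j) x * (Qstar (H - j) x (gr Qstar (H - j) x)
        - f (H - j) x (gr Qstar (H - j) x)) ≤ ∑ h ∈ Ico (H - j) H, |Dl f h| := by
    intro f hfF j
    induction j with
    | zero =>
        intro _
        have hfH : ∀ x a, f H x a = 0 := by
          intro x a
          have h1 := (hFb f hfF H x a).1
          have h2 := (hFb f hfF H x a).2
          have : ((H : ℝ) - (H : ℝ)) = 0 := by ring
          refine le_antisymm ?_ h1
          rw [← this]; exact h2
        simp [Nat.sub_zero, hQH, hfH]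
    | succ j ih =>
        intro hj1
        have hj : j ≤ H := Nat.le_of_succ_le hj1
        have hkH : H - (j + 1) < H := by omega
        have hk1 : H - (j + 1) + 1 = H - j := by omega
        set k := H - (j + 1) with hkdef
        have key : ∀ x ∈ (univ : Finset X),
            ρ k x * (Qstar k x (gr Qstar k x) - f k x (gr Qstar k x))
            = ρ k x * (TT f k x (gr Qstar k x) - f k x (gr Qstar k x))
              + ρ k x * ∑ x', P k x (gr Qstar k x) x' *
                  (Qstar (k + 1) x' (gr Qstar (k + 1) x')
                    - f (k + 1) x' (gr f (k + 1) x')) := by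
          intro x _
          rw [hQbell k hkH x (gr Qstar k x)]
          simp only [hTTdef, hVsup]
          have e : ∀ x' ∈ (univ : Finset X), P k x (gr Qstar k x) x' *
              (Qstar (k + 1) x' (gr Qstar (k + 1) x') - f (k + 1) x' (gr f (k + 1) x'))
              = P k x (gr Qstar k x) x' * Qstar (k + 1) x' (gr Qstar (k + 1) x')
                - P k x (gr Qstar k x) x' * f (k + 1) x' (gr f (k + 1) x') := by
            intro x' _; ring
          rw [Finset.sum_congr rfl e, Finset.sum_sub_distrib]
          ring
        rw [Finset.sum_congr rfl key, Finset.sum_add_distrib]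
        have hfirst : ∑ x, ρ k x * (TT f k x (gr Qstar k x) - f k x (gr Qstar k x))
            ≤ |Dl f k| := by
          have hz : ∑ x, ρ k x * (TT f k x (gr Qstar k x) - f k x (gr Qstar k x))
              + Dl f k = 0 := by
            simp only [hDldef]
            rw [← Finset.sum_add_distrib]
            apply Finset.sum_eq_zero
            intro x _; ring
          have := neg_le_abs (Dl f k)
          linarith
        have hsecond : ∑ x, ρ k x * ∑ x', P k x (gr Qstar k x) x' *
              (Qstar (k + 1) x' (gr Qstar (k + 1) x') - f (k + 1) x' (gr f (k + 1) x'))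
            ≤ ∑ h ∈ Ico (H - j) H, |Dl f h| := by
          have step1 : ∑ x, ρ k x * ∑ x', P k x (gr Qstar k x) x' *
              (Qstar (k + 1) x' (gr Qstar (k + 1) x') - f (k + 1) x' (gr f (k + 1) x'))
              ≤ ∑ x, ρ k x * ∑ x', P k x (gr Qstar k x) x' *
              (Qstar (k + 1) x' (gr Qstar (k + 1) x') - f (k + 1) x' (gr Qstar (k + 1) x')) := by
            apply Finset.sum_le_sum
            intro x _
            apply mul_le_mul_of_nonneg_left _ (hρnn k x)
            apply Finset.sum_le_sum
            intro x' _
            apply mul_le_mul_of_nonneg_left _ (hPnn _ _ _ _)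
            have := hgr f (k + 1) x' (gr Qstar (k + 1) x')
            linarith
          have step2 : ∑ x, ρ k x * ∑ x', P k x (gr Qstar k x) x' *
              (Qstar (k + 1) x' (gr Qstar (k + 1) x') - f (k + 1) x' (gr Qstar (k + 1) x'))
              = ∑ x', ρ (k + 1) x' *
                (Qstar (k + 1) x' (gr Qstar (k + 1) x') - f (k + 1) x' (gr Qstar (k + 1) x')) := by
            simp_rw [Finset.mul_sum]
            rw [Finset.sum_comm]
            apply Finset.sum_congr rfl
            intro x' _
            rw [hρ k x', Finset.sum_mul]
            apply Finset.sum_congr rfl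
            intro x _; ring
          have hih := ih hj
          rw [← hk1] at hih
          calc ∑ x, ρ k x * ∑ x', P k x (gr Qstar k x) x' *
              (Qstar (k + 1) x' (gr Qstar (k + 1) x') - f (k + 1) x' (gr f (k + 1) x'))
              ≤ ∑ x', ρ (k + 1) x' *
                (Qstar (k + 1) x' (gr Qstar (k + 1) x')
                  - f (k + 1) x' (gr Qstar (k + 1) x')) := step1.trans_eq step2
          _ ≤ ∑ h ∈ Ico (k + 1) H, |Dl f h| := hih
          _ = ∑ h ∈ Ico (H - j) H, |Dl f h| := by rw [hk1]
        calc ∑ x, ρ k x * (TT f k x (gr Qstar k x) - f k x (gr Qstar k x))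
            + ∑ x, ρ k x * ∑ x', P k x (gr Qstar k x) x' *
              (Qstar (k + 1) x' (gr Qstar (k + 1) x') - f (k + 1) x' (gr f (k + 1) x'))
            ≤ |Dl f k| + ∑ h ∈ Ico (H - j) H, |Dl f h| := add_le_add hfirst hsecond
        _ = ∑ h ∈ Ico k H, |Dl f h| := by
              rw [← hk1, Finset.sum_eq_sum_Ico_succ_bot hkH]

  -- the good event
  set Gset : Set (Fin H × Fin n → X × A × X) := {ω | ∀ f ∈ F, ∀ w ∈ W, ∀ h : Fin H,
    |empLoss14 H n R ω f w (gr f) h - mm f w h.val| ≤ t} with hGsetdef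
  -- deterministic analysis on the good event
  have hdet : ∀ ω ∈ Gset, ∀ fhat ∈ F,
      ((∀ w ∈ W, ∀ h : Fin H,
          |empLoss14 H n R ω fhat w (gr fhat) h| ≤ ε / (2 * H) + εF) ∧
        (∀ f ∈ F,
          (∀ w ∈ W, ∀ h : Fin H,
            |empLoss14 H n R ω f w (gr f) h| ≤ ε / (2 * H) + εF) →
          fhat 0 x0 (gr fhat 0 x0) ≤ f 0 x0 (gr f 0 x0))) →
      |fhat 0 x0 (gr fhat 0 x0) - Qstar 0 x0 (gr Qstar 0 x0)|
        ≤ ε + H * εF + H * εW := by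
    intro ω hωG fhat hfhatF hyp
    obtain ⟨hpass, hmin⟩ := hyp
    have hωG' : ∀ f ∈ F, ∀ w ∈ W, ∀ h : Fin H,
        |empLoss14 H n R ω f w (gr f) h - mm f w h.val| ≤ t := hωG
    -- conversion between the εW body and Dl
    have hDlexpr : ∀ (f : ℕ → X → A → ℝ) (k : ℕ),
        (∑ x, ∑ a, (ρ k x * if a = gr Qstar k x then (1 : ℝ) else 0)
          * (f k x a - TT f k x a)) = Dl f k := by
      intro f k
      simp only [hDldef]
      apply Finset.sum_congr rfl
      intro x _
      rw [Finset.sum_eq_single (gr Qstar k x)]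
      · simp
      · intro a _ ha; simp [ha]
      · intro h; exact absurd (mem_univ _) h
    -- choose the best f in F
    obtain ⟨ftil, hftilF, hftileq⟩ := Finset.exists_mem_eq_inf' hF
      (fun f => W.sup' hW fun w => (range H).sup' (nonempty_range_iff.mpr hH.ne') fun k =>
        |mm f w k| + |f 0 x0 (gr f 0 x0) - Qstar 0 x0 (gr Qstar 0 x0)|)
    have hεFtil : εF = W.sup' hW fun w =>
        (range H).sup' (nonempty_range_iff.mpr hH.ne') fun k =>
          |mm ftil w k| + |ftil 0 x0 (gr ftil 0 x0) - Qstar 0 x0 (gr Qstar 0 x0)| :=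
      hεF.trans hftileq
    have heFtil : ∀ w ∈ W, ∀ k ∈ range H,
        |mm ftil w k| + |ftil 0 x0 (gr ftil 0 x0) - Qstar 0 x0 (gr Qstar 0 x0)| ≤ εF := by
      intro w hw k hk
      rw [hεFtil]
      exact Finset.le_sup'_of_le _ hw (Finset.le_sup'
        (fun k => |mm ftil w k|
          + |ftil 0 x0 (gr ftil 0 x0) - Qstar 0 x0 (gr Qstar 0 x0)|) hk)
    -- choose the best w in W
    obtain ⟨wtil, hwtilW, hwtileq⟩ := Finset.exists_mem_eq_inf' hW
      (fun w => F.sup' hF fun f => (range H).sup' (nonempty_range_iff.mpr hH.ne') fun k =>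
        |mm f w k - ∑ x, ∑ a, (ρ k x * if a = gr Qstar k x then (1 : ℝ) else 0)
          * (f k x a - TT f k x a)|)
    have heWtil : ∀ f ∈ F, ∀ k ∈ range H, |mm f wtil k - Dl f k| ≤ εW := by
      intro f hf k hk
      rw [← hDlexpr f k]
      calc |mm f wtil k - ∑ x, ∑ a, (ρ k x * if a = gr Qstar k x then (1 : ℝ) else 0)
            * (f k x a - TT f k x a)|
          ≤ F.sup' hF fun f => (range H).sup' (nonempty_range_iff.mpr hH.ne') fun k =>
            |mm f wtil k - ∑ x, ∑ a, (ρ k x * if a = gr Qstar k x then (1 : ℝ) else 0)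
              * (f k x a - TT f k x a)| :=
            Finset.le_sup'_of_le _ hf (Finset.le_sup'
              (fun k => |mm f wtil k - ∑ x, ∑ a,
                (ρ k x * if a = gr Qstar k x then (1 : ℝ) else 0)
                  * (f k x a - TT f k x a)|) hk)
      _ = εW := (hεW.trans hwtileq).symm
    -- ftil passes the test
    have hpasstil : ∀ w ∈ W, ∀ h : Fin H,
        |empLoss14 H n R ω ftil w (gr ftil) h| ≤ t + εF := by
      intro w hw h
      have h1 := hωG' ftil hftilF w hw h
      have h2 := heFtil w hw h.val (mem_range.mpr h.isLt)
      have h3 := abs_nonneg (ftil 0 x0 (gr ftil 0 x0) - Qstar 0 x0 (gr Qstar 0 x0))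
      have h4 : |empLoss14 H n R ω ftil w (gr ftil) h| ≤
          |empLoss14 H n R ω ftil w (gr ftil) h - mm ftil w h.val| + |mm ftil w h.val| := by
        calc |empLoss14 H n R ω ftil w (gr ftil) h|
            = |empLoss14 H n R ω ftil w (gr ftil) h - mm ftil w h.val + mm ftil w h.val| := by
              ring_nf
        _ ≤ _ := abs_add_le _ _
      linarith
    -- upper bound
    have hupper : fhat 0 x0 (gr fhat 0 x0) - Qstar 0 x0 (gr Qstar 0 x0) ≤ εF := by
      have h1 := hmin ftil hftilF hpasstil
      have h2 := heFtil hW.choose hW.choose_spec 0 (mem_range.mpr hH)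
      have h3 := abs_nonneg (mm ftil hW.choose 0)
      have h4 := (abs_le.mp (by linarith :
        |ftil 0 x0 (gr ftil 0 x0) - Qstar 0 x0 (gr Qstar 0 x0)| ≤ εF)).2
      linarith
    -- per-step bound on Dl fhat
    have hΔ : ∀ k ∈ range H, |Dl fhat k| ≤ 2 * t + εF + εW := by
      intro k hk
      have hkH := mem_range.mp hk
      have h1 : |empLoss14 H n R ω fhat wtil (gr fhat) ⟨k, hkH⟩ - mm fhat wtil k| ≤ t :=
        hωG' fhat hfhatF wtil hwtilW ⟨k, hkH⟩
      have h2 : |empLoss14 H n R ω fhat wtil (gr fhat) ⟨k, hkH⟩| ≤ t + εF :=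
        hpass wtil hwtilW ⟨k, hkH⟩
      have h3 := heWtil fhat hfhatF k hk
      have h1' := abs_le.mp h1
      have h2' := abs_le.mp h2
      have h3' := abs_le.mp h3
      rw [abs_le]
      constructor <;> [skip; skip] <;>
        · first
          | (have := h1'.1; have := h2'.1; have := h3'.1; linarith)
          | (have := h1'.2; have := h2'.2; have := h3'.2; linarith)
    -- telescoping bound
    have htel0 := htel fhat hfhatF H le_rfl
    rw [Nat.sub_self] at htel0
    have hLHS : ∑ x, ρ 0 x * (Qstar 0 x (gr Qstar 0 x) - fhat 0 x (gr Qstar 0 x))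
        = Qstar 0 x0 (gr Qstar 0 x0) - fhat 0 x0 (gr Qstar 0 x0) := by
      rw [Finset.sum_eq_single x0]
      · rw [hρ0]; simp
      · intro x _ hx; rw [hρ0]; simp [hx]
      · intro h; exact absurd (mem_univ _) h
    rw [hLHS] at htel0
    have hRHS : ∑ h ∈ Ico 0 H, |Dl fhat h| ≤ (H : ℝ) * (2 * t + εF + εW) := by
      rw [← Finset.range_eq_Ico]
      calc ∑ h ∈ range H, |Dl fhat h| ≤ ∑ h ∈ range H, (2 * t + εF + εW) :=
            Finset.sum_le_sum hΔ
      _ = (H : ℝ) * (2 * t + εF + εW) := by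
            rw [Finset.sum_const, Finset.card_range, nsmul_eq_mul]
    have hcount : (H : ℝ) * (2 * t + εF + εW) = ε + H * εF + H * εW := by
      rw [htdef]
      field_simp
    have hlow : Qstar 0 x0 (gr Qstar 0 x0) - fhat 0 x0 (gr fhat 0 x0)
        ≤ ε + H * εF + H * εW := by
      have hg := hgr fhat 0 x0 (gr Qstar 0 x0)
      have := htel0.trans (hRHS.trans_eq hcount)
      linarith
    have hεF' : εF ≤ (H : ℝ) * εF := le_mul_of_one_le_left hεF0 hH1
    have hεW' : (0 : ℝ) ≤ (H : ℝ) * εW := mul_nonneg hHR.le hεW0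
    rw [abs_le]
    exact ⟨by linarith, by linarith⟩
  -- probability of the bad event
  have hbad : ∑ ω ∈ (univ : Finset (Fin H × Fin n → X × A × X)).filter (fun ω => ω ∉ Gset),
      ∏ j : Fin H × Fin n, pr j.1 (ω j) ≤ δ := by
    set B : ℝ := C * (H : ℝ) with hBdef
    have hB0 : 0 < B := by positivity
    have hWtnn : ∀ ω : Fin H × Fin n → X × A × X,
        0 ≤ ∏ j : Fin H × Fin n, pr j.1 (ω j) :=
      fun ω => Finset.prod_nonneg fun j _ => hprnn _ _
    set S : Finset ((ℕ → X → A → ℝ) × (ℕ → X → A → ℝ) × Fin H) :=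
      F ×ˢ W ×ˢ (univ : Finset (Fin H)) with hSdef
    set Bad : (ℕ → X → A → ℝ) × (ℕ → X → A → ℝ) × Fin H →
        Finset (Fin H × Fin n → X × A × X) := fun z =>
      (univ : Finset (Fin H × Fin n → X × A × X)).filter (fun ω =>
        t < |empLoss14 H n R ω z.1 z.2.1 (gr z.1) z.2.2 - mm z.1 z.2.1 z.2.2.val|) with hBaddef
    have hsub : (univ : Finset (Fin H × Fin n → X × A × X)).filter (fun ω => ω ∉ Gset)
        ⊆ S.biUnion Bad := by
      intro ω hω
      rw [Finset.mem_filter] at hω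
      have hω' := hω.2
      rw [hGsetdef] at hω'
      simp only [Set.mem_setOf_eq, not_forall] at hω'
      push_neg at hω'
      obtain ⟨f, hf, w, hw, h, hlt⟩ := hω'
      rw [Finset.mem_biUnion]
      refine ⟨(f, w, h), ?_, ?_⟩
      · rw [hSdef]
        exact Finset.mem_product.mpr ⟨hf, Finset.mem_product.mpr ⟨hw, mem_univ _⟩⟩
      · rw [hBaddef, Finset.mem_filter]
        exact ⟨mem_univ _, hlt⟩
    have hKpos : (0 : ℝ) < (F.card : ℝ) * W.card * H := by
      have h1 : 0 < F.card := Finset.card_pos.mpr hF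
      have h2 : 0 < W.card := Finset.card_pos.mpr hW
      positivity
    have hzpos : (0 : ℝ) < 2 * (F.card : ℝ) * W.card * H / δ := by
      have h1 : 0 < F.card := Finset.card_pos.mpr hF
      have h2 : 0 < W.card := Finset.card_pos.mpr hW
      positivity
    -- the Chernoff bound per triple
    have hper : ∀ z ∈ S, ∑ ω ∈ Bad z, ∏ j : Fin H × Fin n, pr j.1 (ω j)
        ≤ δ / ((F.card : ℝ) * W.card * H) := by
      intro z hz
      rw [hSdef, Finset.mem_product] at hz
      obtain ⟨hzf, hz2⟩ := hz
      rw [Finset.mem_product] at hz2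
      obtain ⟨hzw, -⟩ := hz2
      obtain ⟨f, w, h⟩ := z
      simp only at hzf hzw ⊢
      have hgB : ∀ q, |gg f w h.val q| ≤ B := fun q => hggb f hzf w hzw h q
      -- split the two-sided deviation into two one-sided events
      have hsplit : Bad (f, w, h) ⊆
          ((univ : Finset (Fin H × Fin n → X × A × X)).filter (fun ω =>
            (n : ℝ) * t ≤ ∑ i : Fin n, (gg f w h.val (ω (h, i))
              - ∑ y, pr h y * gg f w h.val y))) ∪
          ((univ : Finset (Fin H × Fin n → X × A × X)).filter (fun ω =>
            (n : ℝ) * t ≤ ∑ i : Fin n, ((fun q => -(gg f w h.val q)) (ω (h, i))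
              - ∑ y, pr h y * (fun q => -(gg f w h.val q)) y))) := by
        intro ω hω
        rw [hBaddef, Finset.mem_filter] at hω
        have hω' := hω.2
        rw [hemp ω f w h] at hω'
        have hmn : ∑ y, pr h y * (fun q => -(gg f w h.val q)) y
            = -(∑ y, pr h y * gg f w h.val y) := by
          rw [← Finset.sum_neg_distrib]
          apply Finset.sum_congr rfl
          intro y _; ring
        have hsum1 : ∑ i : Fin n, (gg f w h.val (ω (h, i)) - ∑ y, pr h y * gg f w h.val y)
            = (n : ℝ) * ((n : ℝ)⁻¹ * ∑ i : Fin n, gg f w h.val (ω (h, i)) - mm f w h.val) := by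
          rw [hmean f w h, Finset.sum_sub_distrib, Finset.sum_const, Finset.card_univ,
            Fintype.card_fin, nsmul_eq_mul]
          field_simp
        have habs : (n : ℝ) * t < |∑ i : Fin n, (gg f w h.val (ω (h, i))
            - ∑ y, pr h y * gg f w h.val y)| := by
          rw [hsum1, abs_mul, abs_of_pos hnR]
          exact mul_lt_mul_of_pos_left hω' hnR
        rcases lt_abs.mp habs with hcase | hcase
        · rw [Finset.mem_union, Finset.mem_filter]
          exact Or.inl ⟨mem_univ _, hcase.le⟩
        · rw [Finset.mem_union]
          refine Or.inr ?_
          rw [Finset.mem_filter]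
          refine ⟨mem_univ _, ?_⟩
          have : ∑ i : Fin n, ((fun q => -(gg f w h.val q)) (ω (h, i))
              - ∑ y, pr h y * (fun q => -(gg f w h.val q)) y)
              = -(∑ i : Fin n, (gg f w h.val (ω (h, i)) - ∑ y, pr h y * gg f w h.val y)) := by
            have e5 : ∀ i ∈ (univ : Finset (Fin n)),
                ((fun q => -(gg f w h.val q)) (ω (h, i))
                  - ∑ y, pr h y * (fun q => -(gg f w h.val q)) y)
                = -(gg f w h.val (ω (h, i)) - ∑ y, pr h y * gg f w h.val y) := by
              intro i _
              rw [hmn]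
              ring
            rw [Finset.sum_congr rfl e5, Finset.sum_neg_distrib]
          rw [this]
          exact hcase.le
      have hch1 := chernoff14 (H := H) (n := n) hn pr hprnn hpr1 h (gg f w h.val) B hB0 hgB t ht0.le
      have hch2 := chernoff14 (H := H) (n := n) hn pr hprnn hpr1 h
        (fun q => -(gg f w h.val q)) B hB0 (fun q => by
          rw [abs_neg]; exact hgB q) t ht0.le
      have hBadle : ∑ ω ∈ Bad (f, w, h), ∏ j : Fin H × Fin n, pr j.1 (ω j)
          ≤ 2 * Real.exp (-((n : ℝ) * t ^ 2 / (2 * B ^ 2))) := by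
        calc ∑ ω ∈ Bad (f, w, h), ∏ j : Fin H × Fin n, pr j.1 (ω j)
            ≤ ∑ ω ∈ ((univ : Finset (Fin H × Fin n → X × A × X)).filter (fun ω =>
                (n : ℝ) * t ≤ ∑ i : Fin n, (gg f w h.val (ω (h, i))
                  - ∑ y, pr h y * gg f w h.val y))) ∪
              ((univ : Finset (Fin H × Fin n → X × A × X)).filter (fun ω =>
                (n : ℝ) * t ≤ ∑ i : Fin n, ((fun q => -(gg f w h.val q)) (ω (h, i))
                  - ∑ y, pr h y * (fun q => -(gg f w h.val q)) y))),
              ∏ j : Fin H × Fin n, pr j.1 (ω j) :=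
              Finset.sum_le_sum_of_subset_of_nonneg hsplit (fun ω _ _ => hWtnn ω)
        _ ≤ _ + _ := sumUnionLe14 _ _ _ hWtnn
        _ ≤ Real.exp (-((n : ℝ) * t ^ 2 / (2 * B ^ 2)))
              + Real.exp (-((n : ℝ) * t ^ 2 / (2 * B ^ 2))) := add_le_add hch1 hch2
        _ = 2 * Real.exp (-((n : ℝ) * t ^ 2 / (2 * B ^ 2))) := by ring
      -- numeric bound on the exponential
      have hexpeq : (n : ℝ) * t ^ 2 / (2 * B ^ 2) = (n : ℝ) * ε ^ 2 / (8 * C ^ 2 * H ^ 4) := by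
        rw [htdef, hBdef]
        field_simp
        ring
      have hlog : Real.log (2 * (F.card : ℝ) * W.card * H / δ)
          ≤ (n : ℝ) * ε ^ 2 / (8 * C ^ 2 * H ^ 4) := by
        have h8 : (0 : ℝ) < 8 * C ^ 2 * (H : ℝ) ^ 4 := by positivity
        have h9 : 8 * C ^ 2 * (H : ℝ) ^ 4 * Real.log (2 * (F.card : ℝ) * W.card * H / δ)
            ≤ (n : ℝ) * ε ^ 2 := by
          have := (div_le_iff₀ (by positivity : (0 : ℝ) < ε ^ 2)).mp hsample
          linarith
        rw [le_div_iff₀ h8]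
        linarith
      have hexp : Real.exp (-((n : ℝ) * t ^ 2 / (2 * B ^ 2)))
          ≤ δ / (2 * (F.card : ℝ) * W.card * H) := by
        rw [hexpeq]
        calc Real.exp (-((n : ℝ) * ε ^ 2 / (8 * C ^ 2 * H ^ 4)))
            ≤ Real.exp (-Real.log (2 * (F.card : ℝ) * W.card * H / δ)) :=
              Real.exp_le_exp.mpr (neg_le_neg hlog)
        _ = δ / (2 * (F.card : ℝ) * W.card * H) := by
              rw [Real.exp_neg, Real.exp_log hzpos, inv_div]
      calc ∑ ω ∈ Bad (f, w, h), ∏ j : Fin H × Fin n, pr j.1 (ω j)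
          ≤ 2 * Real.exp (-((n : ℝ) * t ^ 2 / (2 * B ^ 2))) := hBadle
      _ ≤ 2 * (δ / (2 * (F.card : ℝ) * W.card * H)) := by linarith
      _ = δ / ((F.card : ℝ) * W.card * H) := by
            field_simp
    calc ∑ ω ∈ (univ : Finset (Fin H × Fin n → X × A × X)).filter (fun ω => ω ∉ Gset),
        ∏ j : Fin H × Fin n, pr j.1 (ω j)
        ≤ ∑ ω ∈ S.biUnion Bad, ∏ j : Fin H × Fin n, pr j.1 (ω j) :=
          Finset.sum_le_sum_of_subset_of_nonneg hsub (fun ω _ _ => hWtnn ω)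
    _ ≤ ∑ z ∈ S, ∑ ω ∈ Bad z, ∏ j : Fin H × Fin n, pr j.1 (ω j) :=
          sumBiUnionLe14 _ _ _ hWtnn
    _ ≤ ∑ _z ∈ S, δ / ((F.card : ℝ) * W.card * H) := Finset.sum_le_sum hper
    _ = δ := by
          rw [Finset.sum_const, nsmul_eq_mul, hSdef, Finset.card_product,
            Finset.card_product, Finset.card_univ, Fintype.card_fin]
          push_cast
          field_simp
  -- measure-theoretic conclusion
  set M : Measure (Fin H × Fin n → X × A × X) :=
    Measure.pi fun hi : Fin H × Fin n => μ1 hi.1.val with hMdef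
  haveI : IsProbabilityMeasure M := Measure.pi.instIsProbabilityMeasure _
  have hsingle : ∀ ω : Fin H × Fin n → X × A × X,
      M {ω} = ENNReal.ofReal (∏ j : Fin H × Fin n, pr j.1 (ω j)) := by
    intro ω
    rw [← Set.univ_pi_singleton ω, hMdef, Measure.pi_pi]
    rw [ENNReal.ofReal_prod_of_nonneg fun j _ => hprnn j.1 (ω j)]
    exact Finset.prod_congr rfl fun j _ => hμ1 j.1.val (ω j)
  have hMbad : M Gsetᶜ ≤ ENNReal.ofReal δ := by
    have hcover : Gsetᶜ = ⋃ ω ∈ (univ : Finset (Fin H × Fin n → X × A × X)).filter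
        (fun ω => ω ∉ Gset), {ω} := by
      ext ω; simp [Set.mem_compl_iff]
    calc M Gsetᶜ ≤ ∑ ω ∈ (univ : Finset (Fin H × Fin n → X × A × X)).filter
          (fun ω => ω ∉ Gset), M {ω} := by
          rw [hcover]; exact measure_biUnion_finset_le _ _
    _ = ENNReal.ofReal (∑ ω ∈ (univ : Finset (Fin H × Fin n → X × A × X)).filter
          (fun ω => ω ∉ Gset), ∏ j : Fin H × Fin n, pr j.1 (ω j)) := by
          rw [ENNReal.ofReal_sum_of_nonneg fun ω _ => Finset.prod_nonneg fun j _ => hprnn _ _]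
          exact Finset.sum_congr rfl fun ω _ => hsingle ω
    _ ≤ ENNReal.ofReal δ := ENNReal.ofReal_le_ofReal hbad
  have hMgood : ENNReal.ofReal (1 - δ) ≤ M Gset := by
    have h1 : (1 : ENNReal) ≤ M Gset + M Gsetᶜ := by
      rw [← measure_univ (μ := M)]
      have : (Set.univ : Set (Fin H × Fin n → X × A × X)) = Gset ∪ Gsetᶜ := by
        rw [Set.union_compl_self]
      rw [this]
      exact measure_union_le _ _
    have h2 : (1 : ENNReal) ≤ M Gset + ENNReal.ofReal δ :=
      le_trans h1 (add_le_add le_rfl hMbad)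
    have h3 : ENNReal.ofReal (1 - δ) + ENNReal.ofReal δ = 1 := by
      rw [← ENNReal.ofReal_add (by linarith) hδ.le]
      norm_num
    have h4 : ENNReal.ofReal (1 - δ) + ENNReal.ofReal δ ≤ M Gset + ENNReal.ofReal δ := by
      rw [h3]; exact h2
    exact ENNReal.le_of_add_le_add_right ENNReal.ofReal_ne_top h4
  refine le_trans hMgood (measure_mono ?_)
  intro ω hω
  exact hdet ω hω
end
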